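/- arXiv:1007.2337 — 6 statements merged into one kernel-verified Lean document; each statement's English description precedes it below -/
import Mathlib

section
/- Let n be a positive integer with n ≡ 1 (mod 4), set m = (n−1)/2, and let k be an integer with 1 ≤ k ≤ m. Then there exists a square identity of size [r, s, N] with r = 2n, s = Σ_{i=0}^{k−1} 2·C(n, m−i), and N = Σ_{i=0}^{k} 2·C(n, m−i). -/
/-- A square identity of size `[r, s, N]`: there exist integer coefficients
`lam m i j` such that `(a₁²+⋯+a_r²)(b₁²+⋯+b_s²) = c₁²+⋯+c_N²` for all real
`a`'s and `b`'s, where `c_m = Σ_{i,j} lam m i j · a_i · b_j`. -/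
def IsSquareIdentity (r s N : ℕ) : Prop :=
  ∃ lam : Fin N → Fin r → Fin s → ℤ,
    ∀ (a : Fin r → ℝ) (b : Fin s → ℝ),
      (∑ i, a i ^ 2) * (∑ j, b j ^ 2) =
        ∑ m, (∑ i, ∑ j, (lam m i j : ℝ) * a i * b j) ^ 2

open Finset

namespace SqId

variable {n : ℕ}

/-- sign: (-1)^{#elements of S smaller than i} -/
def eps (i : Fin n) (S : Finset (Fin n)) : ℤ := (-1) ^ ((S.filter fun j => j < i).card)

/-- Hodge-type sign -/
def gsg (T : Finset (Fin n)) : ℤ := (-1) ^ (∑ t ∈ T, (t : ℕ))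

lemma eps_mul_self (i : Fin n) (S : Finset (Fin n)) : eps i S * eps i S = 1 := by
  rw [eps, ← pow_add]; exact Even.neg_one_pow ⟨_, rfl⟩

lemma gsg_mul_self (T : Finset (Fin n)) : gsg T * gsg T = 1 := by
  rw [gsg, ← pow_add]; exact Even.neg_one_pow ⟨_, rfl⟩

lemma eps_insert {j : Fin n} {S : Finset (Fin n)} (h : j ∉ S) (i : Fin n) :
    eps i (insert j S) = (if j < i then -1 else 1) * eps i S := by
  rw [eps, eps, filter_insert]
  split
  · rw [card_insert_of_notMem (fun hc => h (mem_filter.1 hc).1), pow_succ, mul_comm]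
  · rw [one_mul]

/-- the fundamental anticommutation sign relation -/
lemma eps_L2 {i j : Fin n} (hij : i ≠ j) {Q : Finset (Fin n)} (hi : i ∉ Q) (hj : j ∉ Q) :
    eps i (insert j Q) * eps j Q = -(eps j (insert i Q) * eps i Q) := by
  rw [eps_insert hj i, eps_insert hi j]
  rcases lt_or_gt_of_ne hij with h | h
  · rw [if_neg (asymm h), if_pos h]; ring
  · rw [if_pos h, if_neg (asymm h)]; ring

lemma eps_L1 {i j : Fin n} (hij : i ≠ j) {Q : Finset (Fin n)} (hi : i ∉ Q) (hj : j ∉ Q) :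
    eps i (insert j Q) * eps j (insert i Q) = -(eps i Q * eps j Q) := by
  rw [eps_insert hj i, eps_insert hi j]
  rcases lt_or_gt_of_ne hij with h | h
  · rw [if_neg (asymm h), if_pos h]; ring
  · rw [if_pos h, if_neg (asymm h)]; ring

lemma neg_one_pow_eq_neg {p q : ℕ} (h : Odd (p + q)) : (-1 : ℤ) ^ p = -(-1) ^ q := by
  have h1 : ((-1 : ℤ) ^ q) * ((-1 : ℤ) ^ q) = 1 := by
    rw [← pow_add]; exact Even.neg_one_pow ⟨q, rfl⟩
  have h2 : ((-1 : ℤ) ^ p) * ((-1 : ℤ) ^ q) = -1 := by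
    rw [← pow_add]; exact Odd.neg_one_pow h
  calc (-1 : ℤ) ^ p = (-1) ^ p * ((-1) ^ q * (-1) ^ q) := by rw [h1, mul_one]
    _ = ((-1) ^ p * (-1) ^ q) * (-1) ^ q := by ring
    _ = -(-1) ^ q := by rw [h2]; ring

lemma card_filter_lt_univ (i : Fin n) : (univ.filter fun j => j < i).card = (i : ℕ) := by
  have : (Finset.univ.filter (fun j => j < i)) = Finset.Iio i := by ext j; simp
  rw [this, Fin.card_Iio]

/-- For disjoint A B with A ∪ B = {i,j}ᶜ : counting elements below i. -/
lemma card_filter_split {i j : Fin n} (hij : i ≠ j) {A B : Finset (Fin n)}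
    (hd : Disjoint A B) (hu : A ∪ B = ({i, j} : Finset (Fin n))ᶜ) :
    (A.filter fun t => t < i).card + (B.filter fun t => t < i).card
      + (if j < i then 1 else 0) = (i : ℕ) := by
  have h1 : (A.filter fun t => t < i).card + (B.filter fun t => t < i).card
      = ((A ∪ B).filter fun t => t < i).card := by
    rw [filter_union, card_union_of_disjoint (disjoint_filter_filter hd)]
  have h2 : (({i, j} : Finset (Fin n)).filter fun t => t < i).card = if j < i then 1 else 0 := by
    rw [filter_insert, if_neg (lt_irrefl i), filter_singleton]
    split <;> simp
  have h3 : ({i, j} : Finset (Fin n))ᶜ ∪ {i, j} = univ := by rw [union_comm]; exact union_compl _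
  have h4 : Disjoint (({i, j} : Finset (Fin n))ᶜ) {i, j} := disjoint_compl_left
  rw [h1, hu, ← h2, ← card_union_of_disjoint (disjoint_filter_filter h4), ← filter_union, h3,
    card_filter_lt_univ]


lemma compl_insert_erase {i j : Fin n} {T : Finset (Fin n)} (hi : i ∈ T) (hj : j ∉ T) :
    (insert j (T.erase i))ᶜ.erase i = Tᶜ.erase j := by
  ext u
  by_cases hui : u = i <;> by_cases huj : u = j <;>
    simp [hui, huj, hi, hj, mem_erase, mem_compl, mem_insert] <;> tauto

lemma keysign {i j : Fin n} {T : Finset (Fin n)} (hi : i ∈ T) (hj : j ∉ T) :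
    gsg T * (eps i (T.erase i) * eps j (Tᶜ.erase j))
      = -(gsg (insert j (T.erase i)) * (eps j (T.erase i) * eps i (Tᶜ.erase j))) := by
  have hij : i ≠ j := fun h => hj (h ▸ hi)
  have hiA : i ∉ T.erase i := notMem_erase _ _
  have hjA : j ∉ T.erase i := fun h => hj (mem_of_mem_erase h)
  have hd : Disjoint (T.erase i) (Tᶜ.erase j) := disjoint_left.2 fun u hu hu' =>
    (mem_compl.1 (mem_of_mem_erase hu')) (mem_of_mem_erase hu)
  have hu : T.erase i ∪ Tᶜ.erase j = ({i, j} : Finset (Fin n))ᶜ := by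
    ext u
    by_cases hui : u = i <;> by_cases huj : u = j <;>
      simp [hui, huj, hi, hj, mem_erase, mem_compl, mem_insert, mem_union] <;> tauto
  have h1 := card_filter_split hij hd hu
  have h2 := card_filter_split hij.symm hd (by rw [hu]; congr 1; rw [pair_comm])
  have hgT : gsg T = (-1 : ℤ) ^ ((i : ℕ) + ∑ t ∈ T.erase i, (t : ℕ)) := by
    rw [gsg, ← sum_insert hiA, insert_erase hi]
  have hgT' : gsg (insert j (T.erase i)) = (-1 : ℤ) ^ ((j : ℕ) + ∑ t ∈ T.erase i, (t : ℕ)) := by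
    rw [gsg, sum_insert hjA]
  rw [hgT, hgT', eps, eps, eps, eps, ← pow_add, ← pow_add, ← pow_add, ← pow_add]
  apply neg_one_pow_eq_neg
  rw [Nat.odd_iff]
  rcases lt_or_gt_of_ne hij with h | h
  · rw [if_neg (asymm h)] at h1; rw [if_pos h] at h2; omega
  · rw [if_pos h] at h1; rw [if_neg (asymm h)] at h2; omega

noncomputable def Dop (a : Fin n → ℂ) (x : Finset (Fin n) → ℂ) (T : Finset (Fin n)) : ℂ :=
  ∑ i ∈ Tᶜ, (starRingEnd ℂ) (a i) * (eps i T : ℂ) * x (insert i T)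

noncomputable def Mop (a : Fin n → ℂ) (x : Finset (Fin n) → ℂ) (T : Finset (Fin n)) : ℂ :=
  ∑ i ∈ T, a i * (eps i (T.erase i) : ℂ) * x (T.erase i)

lemma sum_D_mul_conj_M (a : Fin n → ℂ) (x : Finset (Fin n) → ℂ) :
    ∑ T : Finset (Fin n), Dop a x T * (starRingEnd ℂ) (Mop a x T) = 0 := by
  have expand : ∀ T : Finset (Fin n), Dop a x T * (starRingEnd ℂ) (Mop a x T)
      = ∑ p ∈ Tᶜ ×ˢ T,
          (starRingEnd ℂ) (a p.1) * (eps p.1 T : ℂ) * x (insert p.1 T) *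
            ((starRingEnd ℂ) (a p.2) * (eps p.2 (T.erase p.2) : ℂ) *
              (starRingEnd ℂ) (x (T.erase p.2))) := by
    intro T
    rw [Dop, Mop, map_sum, sum_mul_sum]
    simp only [map_mul, map_intCast]
    exact (sum_product' _ _ _).symm
  simp only [expand]
  rw [sum_sigma' univ (fun T => Tᶜ ×ˢ T)
    (fun T p => (starRingEnd ℂ) (a p.1) * (eps p.1 T : ℂ) * x (insert p.1 T) *
      ((starRingEnd ℂ) (a p.2) * (eps p.2 (T.erase p.2) : ℂ) *
        (starRingEnd ℂ) (x (T.erase p.2))))]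
  apply Finset.sum_involution
    (fun q _ => ⟨insert q.2.1 (q.1.erase q.2.2), (q.2.2, q.2.1)⟩)
  · -- cancellation
    rintro ⟨T, i, j⟩ hq
    simp only [mem_sigma, mem_product, mem_compl] at hq
    obtain ⟨-, hi, hj⟩ := hq
    have hij : i ≠ j := fun h => hi (h ▸ hj)
    have hiQ : i ∉ T.erase j := fun h => hi (mem_of_mem_erase h)
    have hjQ : j ∉ T.erase j := notMem_erase _ _
    have hs1 : (insert i (T.erase j)).erase i = T.erase j := erase_insert hiQ
    have hs2 : insert j (insert i (T.erase j)) = insert i T := by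
      rw [Finset.insert_comm, insert_erase hj]
    have hsgn := eps_L2 hij hiQ hjQ
    rw [insert_erase hj] at hsgn
    have hc : (eps i T : ℂ) * (eps j (T.erase j) : ℂ)
        = -((eps j (insert i (T.erase j)) : ℂ) * (eps i (T.erase j) : ℂ)) := by
      exact_mod_cast congrArg (Int.cast : ℤ → ℂ) hsgn
    dsimp only
    rw [hs1, hs2]
    linear_combination ((starRingEnd ℂ) (a i) * (starRingEnd ℂ) (a j) * x (insert i T) *
      (starRingEnd ℂ) (x (T.erase j))) * hc
  · -- fixed point free
    rintro ⟨T, i, j⟩ hq -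
    simp only [mem_sigma, mem_product, mem_compl] at hq
    obtain ⟨-, hi, hj⟩ := hq
    have hij : i ≠ j := fun h => hi (h ▸ hj)
    intro heq
    obtain ⟨-, h2⟩ := Sigma.mk.inj_iff.1 heq
    exact hij (congrArg Prod.snd (eq_of_heq h2))
  · -- involutive
    rintro ⟨T, i, j⟩ hq
    simp only [mem_sigma, mem_product, mem_compl] at hq
    obtain ⟨-, hi, hj⟩ := hq
    have hiQ : i ∉ T.erase j := fun h => hi (mem_of_mem_erase h)
    dsimp only
    rw [erase_insert hiQ, insert_erase hj]
  · -- maps into the set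
    rintro ⟨T, i, j⟩ hq
    simp only [mem_sigma, mem_product, mem_compl] at hq ⊢
    obtain ⟨-, hi, hj⟩ := hq
    have hij : i ≠ j := fun h => hi (h ▸ hj)
    refine ⟨mem_univ _, ?_, mem_insert_self _ _⟩
    rw [mem_insert]
    push_neg
    exact ⟨fun h => hij h.symm, notMem_erase _ _⟩

noncomputable def Gop (a : Fin n → ℂ) (x : Finset (Fin n) → ℂ) (T : Finset (Fin n)) : ℂ :=
  (gsg T : ℂ) * (starRingEnd ℂ) (Mop a x Tᶜ)

lemma sum_M_mul_conj_G (a : Fin n → ℂ) (x : Finset (Fin n) → ℂ) (m : ℕ) :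
    ∑ T ∈ univ.filter (fun T : Finset (Fin n) => T.card = m),
      Mop a x T * (starRingEnd ℂ) (Gop a x T) = 0 := by
  have expand : ∀ T : Finset (Fin n), Mop a x T * (starRingEnd ℂ) (Gop a x T)
      = ∑ p ∈ T ×ˢ Tᶜ,
          (gsg T : ℂ) * (a p.1 * (eps p.1 (T.erase p.1) : ℂ) * x (T.erase p.1)) *
            (a p.2 * (eps p.2 (Tᶜ.erase p.2) : ℂ) * x (Tᶜ.erase p.2)) := by
    intro T
    rw [Gop, map_mul, map_intCast, Complex.conj_conj, Mop, Mop, mul_left_comm, sum_mul_sum]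
    simp only [mul_sum]
    rw [show (∑ p ∈ T ×ˢ Tᶜ,
          (gsg T : ℂ) * (a p.1 * (eps p.1 (T.erase p.1) : ℂ) * x (T.erase p.1)) *
            (a p.2 * (eps p.2 (Tᶜ.erase p.2) : ℂ) * x (Tᶜ.erase p.2)))
        = ∑ i ∈ T, ∑ j ∈ Tᶜ,
          (gsg T : ℂ) * (a i * (eps i (T.erase i) : ℂ) * x (T.erase i)) *
            (a j * (eps j (Tᶜ.erase j) : ℂ) * x (Tᶜ.erase j)) from sum_product' T Tᶜ
          (fun i j => (gsg T : ℂ) * (a i * (eps i (T.erase i) : ℂ) * x (T.erase i)) *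
            (a j * (eps j (Tᶜ.erase j) : ℂ) * x (Tᶜ.erase j)))]
    exact sum_congr rfl fun i _ => sum_congr rfl fun j _ => by ring
  simp only [expand]
  rw [sum_sigma' (univ.filter (fun T : Finset (Fin n) => T.card = m)) (fun T => T ×ˢ Tᶜ)
    (fun T p => (gsg T : ℂ) * (a p.1 * (eps p.1 (T.erase p.1) : ℂ) * x (T.erase p.1)) *
      (a p.2 * (eps p.2 (Tᶜ.erase p.2) : ℂ) * x (Tᶜ.erase p.2)))]
  apply Finset.sum_involution
    (fun q _ => ⟨insert q.2.2 (q.1.erase q.2.1), (q.2.2, q.2.1)⟩)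
  · -- cancellation
    rintro ⟨T, i, j⟩ hq
    simp only [mem_sigma, mem_product, mem_compl, mem_filter] at hq
    obtain ⟨-, hi, hj⟩ := hq
    have hjQ : j ∉ T.erase i := fun h => hj (mem_of_mem_erase h)
    have hs1 : (insert j (T.erase i)).erase j = T.erase i := erase_insert hjQ
    have hs2 := compl_insert_erase hi hj
    have hc : (gsg T : ℂ) * ((eps i (T.erase i) : ℂ) * (eps j (Tᶜ.erase j) : ℂ))
        = -((gsg (insert j (T.erase i)) : ℂ) *
            ((eps j (T.erase i) : ℂ) * (eps i (Tᶜ.erase j) : ℂ))) := by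
      exact_mod_cast congrArg (Int.cast : ℤ → ℂ) (keysign hi hj)
    dsimp only
    rw [hs1, hs2]
    linear_combination (a i * a j * x (T.erase i) * x (Tᶜ.erase j)) * hc
  · -- fixed point free
    rintro ⟨T, i, j⟩ hq -
    simp only [mem_sigma, mem_product, mem_compl, mem_filter] at hq
    obtain ⟨-, hi, hj⟩ := hq
    have hij : i ≠ j := fun h => hj (h ▸ hi)
    intro heq
    obtain ⟨-, h2⟩ := Sigma.mk.inj_iff.1 heq
    exact hij (congrArg Prod.snd (eq_of_heq h2))
  · -- involutive
    rintro ⟨T, i, j⟩ hq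
    simp only [mem_sigma, mem_product, mem_compl, mem_filter] at hq
    obtain ⟨-, hi, hj⟩ := hq
    have hjQ : j ∉ T.erase i := fun h => hj (mem_of_mem_erase h)
    dsimp only
    rw [erase_insert hjQ, insert_erase hi]
  · -- maps into the set
    rintro ⟨T, i, j⟩ hq
    simp only [mem_sigma, mem_product, mem_compl, mem_filter] at hq ⊢
    obtain ⟨⟨-, hcard⟩, hi, hj⟩ := hq
    have hij : i ≠ j := fun h => hj (h ▸ hi)
    have hjQ : j ∉ T.erase i := fun h => hj (mem_of_mem_erase h)
    refine ⟨⟨mem_univ _, ?_⟩, mem_insert_self _ _, ?_⟩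
    · rw [card_insert_of_notMem hjQ, card_erase_of_mem hi]
      have : 1 ≤ T.card := card_pos.2 ⟨i, hi⟩
      omega
    · rw [mem_insert]
      push_neg
      exact ⟨hij, notMem_erase _ _⟩

lemma eps_sq_complex (i : Fin n) (S : Finset (Fin n)) :
    (eps i S : ℂ) * (eps i S : ℂ) = 1 := by
  exact_mod_cast congrArg (Int.cast : ℤ → ℂ) (eps_mul_self i S)

lemma sum_DD_add_MM (a : Fin n → ℂ) (x : Finset (Fin n) → ℂ) :
    (∑ T : Finset (Fin n), Dop a x T * (starRingEnd ℂ) (Dop a x T))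
      + ∑ T : Finset (Fin n), Mop a x T * (starRingEnd ℂ) (Mop a x T)
    = (∑ i, a i * (starRingEnd ℂ) (a i)) *
        (∑ S : Finset (Fin n), x S * (starRingEnd ℂ) (x S)) := by
  classical
  -- expand D
  have expandD : ∀ T : Finset (Fin n), Dop a x T * (starRingEnd ℂ) (Dop a x T)
      = ∑ p ∈ Tᶜ ×ˢ Tᶜ,
          ((starRingEnd ℂ) (a p.1) * (eps p.1 T : ℂ) * x (insert p.1 T)) *
            (a p.2 * (eps p.2 T : ℂ) * (starRingEnd ℂ) (x (insert p.2 T))) := by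
    intro T
    rw [Dop, map_sum, sum_mul_sum]
    rw [show (∑ p ∈ Tᶜ ×ˢ Tᶜ,
          ((starRingEnd ℂ) (a p.1) * (eps p.1 T : ℂ) * x (insert p.1 T)) *
            (a p.2 * (eps p.2 T : ℂ) * (starRingEnd ℂ) (x (insert p.2 T))))
        = ∑ i ∈ Tᶜ, ∑ j ∈ Tᶜ,
          ((starRingEnd ℂ) (a i) * (eps i T : ℂ) * x (insert i T)) *
            (a j * (eps j T : ℂ) * (starRingEnd ℂ) (x (insert j T))) from sum_product' Tᶜ Tᶜ
          (fun i j => ((starRingEnd ℂ) (a i) * (eps i T : ℂ) * x (insert i T)) *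
            (a j * (eps j T : ℂ) * (starRingEnd ℂ) (x (insert j T))))]
    refine sum_congr rfl fun i _ => sum_congr rfl fun j _ => ?_
    simp only [map_mul, map_intCast, Complex.conj_conj]
    try ring
  have expandM : ∀ T : Finset (Fin n), Mop a x T * (starRingEnd ℂ) (Mop a x T)
      = ∑ p ∈ T ×ˢ T,
          (a p.1 * (eps p.1 (T.erase p.1) : ℂ) * x (T.erase p.1)) *
            ((starRingEnd ℂ) (a p.2) * (eps p.2 (T.erase p.2) : ℂ) *
              (starRingEnd ℂ) (x (T.erase p.2))) := by
    intro T
    rw [Mop, map_sum, sum_mul_sum]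
    rw [show (∑ p ∈ T ×ˢ T,
          (a p.1 * (eps p.1 (T.erase p.1) : ℂ) * x (T.erase p.1)) *
            ((starRingEnd ℂ) (a p.2) * (eps p.2 (T.erase p.2) : ℂ) *
              (starRingEnd ℂ) (x (T.erase p.2))))
        = ∑ i ∈ T, ∑ j ∈ T,
          (a i * (eps i (T.erase i) : ℂ) * x (T.erase i)) *
            ((starRingEnd ℂ) (a j) * (eps j (T.erase j) : ℂ) *
              (starRingEnd ℂ) (x (T.erase j))) from sum_product' T T
          (fun i j => (a i * (eps i (T.erase i) : ℂ) * x (T.erase i)) *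
            ((starRingEnd ℂ) (a j) * (eps j (T.erase j) : ℂ) *
              (starRingEnd ℂ) (x (T.erase j))))]
    refine sum_congr rfl fun i _ => sum_congr rfl fun j _ => ?_
    simp only [map_mul, map_intCast, Complex.conj_conj]
    try ring
  simp only [expandD, expandM]
  rw [sum_sigma' univ (fun T => Tᶜ ×ˢ Tᶜ)
    (fun T p => ((starRingEnd ℂ) (a p.1) * (eps p.1 T : ℂ) * x (insert p.1 T)) *
      (a p.2 * (eps p.2 T : ℂ) * (starRingEnd ℂ) (x (insert p.2 T))))]
  rw [sum_sigma' univ (fun T => T ×ˢ T)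
    (fun T p => (a p.1 * (eps p.1 (T.erase p.1) : ℂ) * x (T.erase p.1)) *
      ((starRingEnd ℂ) (a p.2) * (eps p.2 (T.erase p.2) : ℂ) *
        (starRingEnd ℂ) (x (T.erase p.2))))]
  rw [← sum_filter_add_sum_filter_not (univ.sigma fun T => Tᶜ ×ˢ Tᶜ)
    (fun q => q.2.1 = q.2.2)]
  rw [← sum_filter_add_sum_filter_not (univ.sigma fun T => T ×ˢ T)
    (fun q => q.2.1 = q.2.2)]
  -- off-diagonal parts cancel
  have hoff : ∑ q ∈ (univ.sigma fun T : Finset (Fin n) => Tᶜ ×ˢ Tᶜ).filter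
        (fun q => ¬ q.2.1 = q.2.2),
        ((starRingEnd ℂ) (a q.2.1) * (eps q.2.1 q.1 : ℂ) * x (insert q.2.1 q.1)) *
          (a q.2.2 * (eps q.2.2 q.1 : ℂ) * (starRingEnd ℂ) (x (insert q.2.2 q.1)))
      = ∑ q ∈ (univ.sigma fun T : Finset (Fin n) => T ×ˢ T).filter
        (fun q => ¬ q.2.1 = q.2.2),
        -((a q.2.1 * (eps q.2.1 (q.1.erase q.2.1) : ℂ) * x (q.1.erase q.2.1)) *
          ((starRingEnd ℂ) (a q.2.2) * (eps q.2.2 (q.1.erase q.2.2) : ℂ) *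
            (starRingEnd ℂ) (x (q.1.erase q.2.2)))) := by
    refine sum_nbij' (fun q => ⟨insert q.2.1 (insert q.2.2 q.1), (q.2.2, q.2.1)⟩)
      (fun q => ⟨(q.1.erase q.2.1).erase q.2.2, (q.2.2, q.2.1)⟩) ?_ ?_ ?_ ?_ ?_
    · rintro ⟨T, i, i'⟩ hq
      simp only [mem_filter, mem_sigma, mem_product, mem_compl] at hq
      obtain ⟨⟨-, hi, hi'⟩, hne⟩ := hq
      exact mem_filter.2 ⟨mem_sigma.2 ⟨mem_univ _, mem_product.2
        ⟨mem_insert_of_mem (mem_insert_self _ _), mem_insert_self _ _⟩⟩,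
        fun h => hne h.symm⟩
    · rintro ⟨U, j, j'⟩ hq
      simp only [mem_filter, mem_sigma, mem_product] at hq
      obtain ⟨⟨-, hj, hj'⟩, hne⟩ := hq
      have h1 : j' ∉ (U.erase j).erase j' := notMem_erase _ _
      have h2 : j ∉ (U.erase j).erase j' := fun h => (notMem_erase j U) (mem_of_mem_erase h)
      exact mem_filter.2 ⟨mem_sigma.2 ⟨mem_univ _, mem_product.2
        ⟨mem_compl.2 h1, mem_compl.2 h2⟩⟩, fun h => hne h.symm⟩
    · rintro ⟨T, i, i'⟩ hq
      simp only [mem_filter, mem_sigma, mem_product, mem_compl] at hq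
      obtain ⟨⟨-, hi, hi'⟩, hne⟩ := hq
      have h1 : (insert i (insert i' T)).erase i' = insert i T := by
        rw [erase_insert_of_ne (fun h => hne h), erase_insert hi']
      dsimp only
      rw [h1, erase_insert hi]
    · rintro ⟨U, j, j'⟩ hq
      simp only [mem_filter, mem_sigma, mem_product] at hq
      obtain ⟨⟨-, hj, hj'⟩, hne⟩ := hq
      have h1 : insert j' ((U.erase j).erase j') = U.erase j := by
        refine insert_erase ?_
        rw [mem_erase]
        exact ⟨fun h => hne h.symm, hj'⟩
      have h2 : (U.erase j).erase j' = (U.erase j').erase j := by ext u; simp [mem_erase]; tauto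
      have h3 : insert j ((U.erase j').erase j) = U.erase j' := by
        refine insert_erase ?_
        rw [mem_erase]
        exact ⟨fun h => hne h, hj⟩
      dsimp only
      rw [h2, h3, insert_erase hj']
    · rintro ⟨T, i, i'⟩ hq
      simp only [mem_filter, mem_sigma, mem_product, mem_compl] at hq
      obtain ⟨⟨-, hi, hi'⟩, hne⟩ := hq
      have hne' : i ≠ i' := fun h => hne h
      have h1 : (insert i (insert i' T)).erase i' = insert i T := by
        rw [erase_insert_of_ne hne', erase_insert hi']
      have h2 : (insert i (insert i' T)).erase i = insert i' T := by
        refine erase_insert ?_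
        rw [mem_insert]
        push_neg
        exact ⟨hne', hi⟩
      dsimp only
      rw [h1, h2]
      have hc : (eps i (insert i' T) : ℂ) * (eps i' (insert i T) : ℂ)
          = -((eps i T : ℂ) * (eps i' T : ℂ)) := by
        exact_mod_cast congrArg (Int.cast : ℤ → ℂ) (eps_L1 hne' hi hi')
      linear_combination ((starRingEnd ℂ) (a i) * a i' * x (insert i T) *
        (starRingEnd ℂ) (x (insert i' T))) * hc
  rw [hoff, sum_neg_distrib]
  have hdd : ∑ q ∈ (univ.sigma fun T : Finset (Fin n) => Tᶜ ×ˢ Tᶜ).filter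
        (fun q => q.2.1 = q.2.2),
        ((starRingEnd ℂ) (a q.2.1) * (eps q.2.1 q.1 : ℂ) * x (insert q.2.1 q.1)) *
          (a q.2.2 * (eps q.2.2 q.1 : ℂ) * (starRingEnd ℂ) (x (insert q.2.2 q.1)))
      = ∑ q ∈ univ.sigma (fun S : Finset (Fin n) => S),
          a q.2 * (starRingEnd ℂ) (a q.2) * (x q.1 * (starRingEnd ℂ) (x q.1)) := by
    refine sum_nbij' (fun q => ⟨insert q.2.1 q.1, q.2.1⟩)
      (fun q => ⟨q.1.erase q.2, (q.2, q.2)⟩) ?_ ?_ ?_ ?_ ?_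
    · rintro ⟨T, i, i'⟩ hq
      exact mem_sigma.2 ⟨mem_univ _, mem_insert_self _ _⟩
    · rintro ⟨S, i⟩ hq
      simp only [mem_sigma] at hq
      obtain ⟨-, hi⟩ := hq
      exact mem_filter.2 ⟨mem_sigma.2 ⟨mem_univ _, mem_product.2
        ⟨mem_compl.2 (notMem_erase _ _), mem_compl.2 (notMem_erase _ _)⟩⟩, rfl⟩
    · rintro ⟨T, i, i'⟩ hq
      simp only [mem_filter, mem_sigma, mem_product, mem_compl] at hq
      obtain ⟨⟨-, hi, -⟩, heq⟩ := hq
      dsimp only at heq ⊢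
      subst heq
      rw [erase_insert hi]
    · rintro ⟨S, i⟩ hq
      simp only [mem_sigma] at hq
      obtain ⟨-, hi⟩ := hq
      dsimp only
      rw [insert_erase hi]
    · rintro ⟨T, i, i'⟩ hq
      simp only [mem_filter, mem_sigma, mem_product, mem_compl] at hq
      obtain ⟨⟨-, hi, -⟩, heq⟩ := hq
      dsimp only at heq ⊢
      subst heq
      linear_combination (a i * (starRingEnd ℂ) (a i) * x (insert i T) *
        (starRingEnd ℂ) (x (insert i T))) * eps_sq_complex i T
  have hdm : ∑ q ∈ (univ.sigma fun T : Finset (Fin n) => T ×ˢ T).filter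
        (fun q => q.2.1 = q.2.2),
        (a q.2.1 * (eps q.2.1 (q.1.erase q.2.1) : ℂ) * x (q.1.erase q.2.1)) *
          ((starRingEnd ℂ) (a q.2.2) * (eps q.2.2 (q.1.erase q.2.2) : ℂ) *
            (starRingEnd ℂ) (x (q.1.erase q.2.2)))
      = ∑ q ∈ univ.sigma (fun S : Finset (Fin n) => Sᶜ),
          a q.2 * (starRingEnd ℂ) (a q.2) * (x q.1 * (starRingEnd ℂ) (x q.1)) := by
    refine sum_nbij' (fun q => ⟨q.1.erase q.2.1, q.2.1⟩)
      (fun q => ⟨insert q.2 q.1, (q.2, q.2)⟩) ?_ ?_ ?_ ?_ ?_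
    · rintro ⟨T, j, j'⟩ hq
      exact mem_sigma.2 ⟨mem_univ _, mem_compl.2 (notMem_erase _ _)⟩
    · rintro ⟨S, i⟩ hq
      simp only [mem_sigma, mem_compl] at hq
      obtain ⟨-, hi⟩ := hq
      exact mem_filter.2 ⟨mem_sigma.2 ⟨mem_univ _, mem_product.2
        ⟨mem_insert_self _ _, mem_insert_self _ _⟩⟩, rfl⟩
    · rintro ⟨T, j, j'⟩ hq
      simp only [mem_filter, mem_sigma, mem_product] at hq
      obtain ⟨⟨-, hj, -⟩, heq⟩ := hq
      dsimp only at heq ⊢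
      subst heq
      rw [insert_erase hj]
    · rintro ⟨S, i⟩ hq
      simp only [mem_sigma, mem_compl] at hq
      obtain ⟨-, hi⟩ := hq
      dsimp only
      rw [erase_insert hi]
    · rintro ⟨T, j, j'⟩ hq
      simp only [mem_filter, mem_sigma, mem_product] at hq
      obtain ⟨⟨-, hj, -⟩, heq⟩ := hq
      dsimp only at heq ⊢
      subst heq
      linear_combination (a j * (starRingEnd ℂ) (a j) * x (T.erase j) *
        (starRingEnd ℂ) (x (T.erase j))) * eps_sq_complex j (T.erase j)
  have hrhs : (∑ i, a i * (starRingEnd ℂ) (a i)) *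
        (∑ S : Finset (Fin n), x S * (starRingEnd ℂ) (x S))
      = (∑ q ∈ univ.sigma (fun S : Finset (Fin n) => S),
          a q.2 * (starRingEnd ℂ) (a q.2) * (x q.1 * (starRingEnd ℂ) (x q.1)))
        + ∑ q ∈ univ.sigma (fun S : Finset (Fin n) => Sᶜ),
          a q.2 * (starRingEnd ℂ) (a q.2) * (x q.1 * (starRingEnd ℂ) (x q.1)) := by
    rw [← sum_sigma' univ (fun S : Finset (Fin n) => S)
      (fun S i => a i * (starRingEnd ℂ) (a i) * (x S * (starRingEnd ℂ) (x S)))]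
    rw [← sum_sigma' univ (fun S : Finset (Fin n) => Sᶜ)
      (fun S i => a i * (starRingEnd ℂ) (a i) * (x S * (starRingEnd ℂ) (x S)))]
    rw [sum_mul_sum, Finset.sum_comm, ← sum_add_distrib]
    refine sum_congr rfl fun S _ => ?_
    exact (sum_add_sum_compl S _).symm
  linear_combination hdd + hdm - hrhs

noncomputable def Fop (a : Fin n → ℂ) (x : Finset (Fin n) → ℂ) (m : ℕ) (T : Finset (Fin n)) :
    ℂ :=
  Dop a x T + (if T.card ≤ m then Mop a x T else 0) + (if T.card = m then Gop a x T else 0)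

section gating

variable {a : Fin n → ℂ} {x : Finset (Fin n) → ℂ} {m k : ℕ}

def Supp (x : Finset (Fin n) → ℂ) (m k : ℕ) : Prop :=
  ∀ S : Finset (Fin n), x S ≠ 0 → m + 1 ≤ S.card + k ∧ S.card ≤ m

lemma Dop_eq_zero_high (hx : Supp x m k) {T : Finset (Fin n)} (hT : m ≤ T.card) :
    Dop a x T = 0 := by
  refine sum_eq_zero fun i hi => ?_
  have hxz : x (insert i T) = 0 := by
    by_contra h
    have := (hx _ h).2
    rw [card_insert_of_notMem (mem_compl.1 hi)] at this
    omega
  rw [hxz, mul_zero]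

lemma Dop_eq_zero_low (hx : Supp x m k) {T : Finset (Fin n)} (hT : T.card + k < m) :
    Dop a x T = 0 := by
  refine sum_eq_zero fun i hi => ?_
  have hxz : x (insert i T) = 0 := by
    by_contra h
    have := (hx _ h).1
    rw [card_insert_of_notMem (mem_compl.1 hi)] at this
    omega
  rw [hxz, mul_zero]

lemma Mop_eq_zero_high (hx : Supp x m k) {T : Finset (Fin n)} (hT : m + 2 ≤ T.card) :
    Mop a x T = 0 := by
  refine sum_eq_zero fun i hi => ?_
  have hxz : x (T.erase i) = 0 := by
    by_contra h
    have := (hx _ h).2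
    rw [card_erase_of_mem hi] at this
    omega
  rw [hxz, mul_zero]

lemma Mop_eq_zero_low (hx : Supp x m k) {T : Finset (Fin n)} (hT : T.card + k < m) :
    Mop a x T = 0 := by
  refine sum_eq_zero fun i hi => ?_
  have hc : 1 ≤ T.card := card_pos.2 ⟨i, hi⟩
  have hxz : x (T.erase i) = 0 := by
    by_contra h
    have := (hx _ h).1
    rw [card_erase_of_mem hi] at this
    omega
  rw [hxz, mul_zero]

lemma Fop_eq_zero (hx : Supp x m k) {T : Finset (Fin n)}
    (hT : ¬(m ≤ T.card + k ∧ T.card ≤ m)) : Fop a x m T = 0 := by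
  rw [Fop]
  push_neg at hT
  by_cases hle : T.card ≤ m
  · have hlow : T.card + k < m := by
      by_contra h
      push_neg at h
      have := hT h
      omega
    rw [Dop_eq_zero_low hx hlow, if_pos hle, Mop_eq_zero_low hx hlow,
      if_neg (by omega), add_zero, add_zero]
  · rw [Dop_eq_zero_high hx (by omega), if_neg hle, if_neg (by omega), add_zero, add_zero]

theorem key_identity (hn : n = 2 * m + 1) (hx : Supp x m k) :
    ∑ T : Finset (Fin n), Fop a x m T * (starRingEnd ℂ) (Fop a x m T)
      = (∑ i, a i * (starRingEnd ℂ) (a i)) *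
          (∑ S : Finset (Fin n), x S * (starRingEnd ℂ) (x S)) := by
  classical
  set D := Dop a x with hD
  set M := Mop a x with hM
  set G := Gop a x with hG
  set Mg : Finset (Fin n) → ℂ := fun T => if T.card ≤ m then M T else 0 with hMg
  set Gg : Finset (Fin n) → ℂ := fun T => if T.card = m then G T else 0 with hGg
  have hzD_high : ∀ {T : Finset (Fin n)}, m ≤ T.card → D T = 0 := fun hT =>
    Dop_eq_zero_high hx hT
  have hzM_high : ∀ {T : Finset (Fin n)}, m + 2 ≤ T.card → M T = 0 := fun hT =>
    Mop_eq_zero_high hx hT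
  have hsplit : ∀ T : Finset (Fin n), Fop a x m T * (starRingEnd ℂ) (Fop a x m T)
      = D T * (starRingEnd ℂ) (D T) + Mg T * (starRingEnd ℂ) (Mg T)
        + Gg T * (starRingEnd ℂ) (Gg T)
        + (D T * (starRingEnd ℂ) (Mg T) + Mg T * (starRingEnd ℂ) (D T))
        + (D T * (starRingEnd ℂ) (Gg T) + Gg T * (starRingEnd ℂ) (D T))
        + (Mg T * (starRingEnd ℂ) (Gg T) + Gg T * (starRingEnd ℂ) (Mg T)) := by
    intro T
    rw [Fop, map_add, map_add]
    ring
  rw [sum_congr rfl fun T _ => hsplit T]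
  simp only [sum_add_distrib]
  -- cross terms D–M
  have h4 : ∑ T : Finset (Fin n), D T * (starRingEnd ℂ) (Mg T) = 0 := by
    rw [show ∑ T : Finset (Fin n), D T * (starRingEnd ℂ) (Mg T)
        = ∑ T : Finset (Fin n), D T * (starRingEnd ℂ) (M T) from
      sum_congr rfl fun T _ => ?_]
    · exact sum_D_mul_conj_M a x
    · by_cases h : T.card ≤ m
      · rw [hMg]; simp only [if_pos h]
      · rw [hMg]
        simp only [if_neg h]
        rw [hzD_high (by omega), map_zero, mul_zero, zero_mul]
  have h5 : ∑ T : Finset (Fin n), Mg T * (starRingEnd ℂ) (D T) = 0 := by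
    have := congrArg (starRingEnd ℂ) h4
    rw [map_sum, map_zero] at this
    rw [← this]
    refine sum_congr rfl fun T _ => ?_
    rw [map_mul, Complex.conj_conj]
    ring
  -- cross terms D–G vanish pointwise
  have h6 : ∀ T : Finset (Fin n), D T * (starRingEnd ℂ) (Gg T) = 0 := by
    intro T
    by_cases h : T.card = m
    · rw [hzD_high (le_of_eq h.symm), zero_mul]
    · rw [hGg]; simp only [if_neg h, map_zero, mul_zero]
  have h7 : ∀ T : Finset (Fin n), Gg T * (starRingEnd ℂ) (D T) = 0 := by
    intro T
    by_cases h : T.card = m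
    · rw [hzD_high (le_of_eq h.symm), map_zero, mul_zero]
    · rw [hGg]; simp only [if_neg h, zero_mul]
  -- cross terms M–G
  have h8 : ∑ T : Finset (Fin n), Mg T * (starRingEnd ℂ) (Gg T) = 0 := by
    rw [show ∑ T : Finset (Fin n), Mg T * (starRingEnd ℂ) (Gg T)
        = ∑ T ∈ univ.filter (fun T : Finset (Fin n) => T.card = m),
            M T * (starRingEnd ℂ) (G T) from ?_]
    · exact sum_M_mul_conj_G a x m
    · rw [sum_filter]
      refine sum_congr rfl fun T _ => ?_
      by_cases h : T.card = m
      · rw [hMg, hGg]; simp only [if_pos h, if_pos (le_of_eq h)]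
      · rw [hMg, hGg]; simp only [if_neg h, map_zero, mul_zero, if_neg h]
  have h9 : ∑ T : Finset (Fin n), Gg T * (starRingEnd ℂ) (Mg T) = 0 := by
    have := congrArg (starRingEnd ℂ) h8
    rw [map_sum, map_zero] at this
    rw [← this]
    refine sum_congr rfl fun T _ => ?_
    rw [map_mul, Complex.conj_conj]
    ring
  -- M/G diagonal reassembly
  have h2 : ∑ T : Finset (Fin n), Mg T * (starRingEnd ℂ) (Mg T)
      = (∑ T : Finset (Fin n), M T * (starRingEnd ℂ) (M T))
        - ∑ T ∈ univ.filter (fun T : Finset (Fin n) => T.card = m + 1),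
            M T * (starRingEnd ℂ) (M T) := by
    have e1 : ∑ T : Finset (Fin n), Mg T * (starRingEnd ℂ) (Mg T)
        = ∑ T ∈ univ.filter (fun T : Finset (Fin n) => T.card ≤ m),
            M T * (starRingEnd ℂ) (M T) := by
      rw [sum_filter]
      refine sum_congr rfl fun T _ => ?_
      by_cases h : T.card ≤ m
      · rw [hMg]; simp only [if_pos h]
      · rw [hMg]; simp only [if_neg h, map_zero, mul_zero]
    have e2 : ∑ T ∈ univ.filter (fun T : Finset (Fin n) => T.card = m + 1),
          M T * (starRingEnd ℂ) (M T)
        = ∑ T ∈ univ.filter (fun T : Finset (Fin n) => ¬ T.card ≤ m),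
            M T * (starRingEnd ℂ) (M T) := by
      refine sum_subset (fun T hT => ?_) (fun T hT hT' => ?_)
      · simp only [mem_filter] at hT ⊢
        exact ⟨hT.1, by omega⟩
      · simp only [mem_filter] at hT hT'
        have : m + 2 ≤ T.card := by
          rcases hT with ⟨-, h⟩
          by_contra hc
          exact hT' ⟨mem_univ _, by omega⟩
        rw [hzM_high this, zero_mul]
    rw [e1, e2, eq_sub_iff_add_eq, sum_filter_add_sum_filter_not]
  have h3 : ∑ T : Finset (Fin n), Gg T * (starRingEnd ℂ) (Gg T)
      = ∑ T ∈ univ.filter (fun T : Finset (Fin n) => T.card = m + 1),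
          M T * (starRingEnd ℂ) (M T) := by
    have e1 : ∑ T : Finset (Fin n), Gg T * (starRingEnd ℂ) (Gg T)
        = ∑ T ∈ univ.filter (fun T : Finset (Fin n) => T.card = m),
            G T * (starRingEnd ℂ) (G T) := by
      rw [sum_filter]
      refine sum_congr rfl fun T _ => ?_
      by_cases h : T.card = m
      · rw [hGg]; simp only [if_pos h]
      · rw [hGg]; simp only [if_neg h, map_zero, mul_zero]
    rw [e1]
    refine sum_nbij' (fun T => Tᶜ) (fun U => Uᶜ) ?_ ?_ ?_ ?_ ?_
    · intro T hT
      simp only [mem_filter] at hT ⊢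
      refine ⟨mem_univ _, ?_⟩
      rw [card_compl, Fintype.card_fin, hT.2, hn]
      omega
    · intro U hU
      simp only [mem_filter] at hU ⊢
      refine ⟨mem_univ _, ?_⟩
      rw [card_compl, Fintype.card_fin, hU.2, hn]
      omega
    · intro T _; exact compl_compl T
    · intro U _; exact compl_compl U
    · intro T hT
      have hgc : (gsg T : ℂ) * (gsg T : ℂ) = 1 := by
        exact_mod_cast congrArg (Int.cast : ℤ → ℂ) (gsg_mul_self T)
      rw [hG]
      rw [Gop, map_mul, map_intCast, Complex.conj_conj]
      linear_combination (Mop a x Tᶜ * (starRingEnd ℂ) (Mop a x Tᶜ)) * hgc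
  rw [h4, h5, h8, h9]
  rw [sum_congr rfl fun T _ => h6 T, sum_congr rfl fun T _ => h7 T]
  simp only [sum_const_zero, add_zero]
  have hK1 := sum_DD_add_MM a x
  rw [← hD, ← hM] at hK1
  linear_combination hK1 + h2 + h3
end gating

def c1 (m : ℕ) (T : Finset (Fin n)) (i : Fin n) (S : Finset (Fin n)) : ℤ :=
  if T.card ≤ m ∧ i ∈ T then (if S = T.erase i then eps i (T.erase i) else 0) else 0
def c3 (T : Finset (Fin n)) (i : Fin n) (S : Finset (Fin n)) : ℤ :=
  if i ∉ T then (if S = insert i T then eps i T else 0) else 0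
def c4 (m : ℕ) (T : Finset (Fin n)) (i : Fin n) (S : Finset (Fin n)) : ℤ :=
  if T.card = m ∧ i ∉ T then
    (if S = Tᶜ.erase i then gsg T * eps i (Tᶜ.erase i) else 0) else 0

variable (a : Fin n → ℂ) (x : Finset (Fin n) → ℂ) (m : ℕ) (T : Finset (Fin n))

lemma repr3 : Dop a x T
    = ∑ i, ∑ W : Finset (Fin n), (c3 T i W : ℂ) * ((starRingEnd ℂ) (a i) * x W) := by
  have inner : ∀ i : Fin n,
      (∑ W : Finset (Fin n), (c3 T i W : ℂ) * ((starRingEnd ℂ) (a i) * x W))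
      = if i ∈ Tᶜ then (starRingEnd ℂ) (a i) * (eps i T : ℂ) * x (insert i T) else 0 := by
    intro i
    by_cases hi : i ∈ T
    · simp [c3, hi]
    · simp only [c3, if_pos hi, apply_ite (fun z : ℤ => (z : ℂ)), Int.cast_zero, ite_mul,
        zero_mul]
      rw [sum_ite_eq' univ (insert i T)
        (fun W => ((eps i T : ℤ) : ℂ) * ((starRingEnd ℂ) (a i) * x W))]
      rw [if_pos (mem_univ _), if_pos (mem_compl.2 hi)]
      ring
  rw [sum_congr rfl fun i (_ : i ∈ univ) => inner i, sum_ite_mem, univ_inter, Dop]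

lemma repr1 : (if T.card ≤ m then Mop a x T else 0)
    = ∑ i, ∑ W : Finset (Fin n), (c1 m T i W : ℂ) * (a i * x W) := by
  by_cases hm : T.card ≤ m
  · have inner : ∀ i : Fin n,
        (∑ W : Finset (Fin n), (c1 m T i W : ℂ) * (a i * x W))
        = if i ∈ T then a i * (eps i (T.erase i) : ℂ) * x (T.erase i) else 0 := by
      intro i
      by_cases hi : i ∈ T
      · simp only [c1, if_pos (And.intro hm hi), apply_ite (fun z : ℤ => (z : ℂ)),
          Int.cast_zero, ite_mul, zero_mul]
        rw [sum_ite_eq' univ (T.erase i)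
          (fun W => ((eps i (T.erase i) : ℤ) : ℂ) * (a i * x W))]
        rw [if_pos (mem_univ _), if_pos hi]
        ring
      · simp [c1, hi]
    rw [sum_congr rfl fun i (_ : i ∈ univ) => inner i, sum_ite_mem, univ_inter, if_pos hm, Mop]
  · simp [c1, hm]

lemma repr4 : (if T.card = m then Gop a x T else 0)
    = ∑ i, ∑ W : Finset (Fin n),
        (c4 m T i W : ℂ) * ((starRingEnd ℂ) (a i) * (starRingEnd ℂ) (x W)) := by
  by_cases hm : T.card = m
  · have inner : ∀ i : Fin n,
        (∑ W : Finset (Fin n),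
          (c4 m T i W : ℂ) * ((starRingEnd ℂ) (a i) * (starRingEnd ℂ) (x W)))
        = if i ∈ Tᶜ then (gsg T : ℂ) * ((starRingEnd ℂ) (a i) * ((eps i (Tᶜ.erase i) : ℂ) *
            (starRingEnd ℂ) (x (Tᶜ.erase i)))) else 0 := by
      intro i
      by_cases hi : i ∈ T
      · simp [c4, hi]
      · simp only [c4, if_pos (And.intro hm hi), apply_ite (fun z : ℤ => (z : ℂ)),
          Int.cast_zero, ite_mul, zero_mul]
        rw [sum_ite_eq' univ (Tᶜ.erase i)
          (fun W => ((gsg T * eps i (Tᶜ.erase i) : ℤ) : ℂ) *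
            ((starRingEnd ℂ) (a i) * (starRingEnd ℂ) (x W)))]
        rw [if_pos (mem_univ _), if_pos (mem_compl.2 hi)]
        push_cast
        ring
    rw [sum_congr rfl fun i (_ : i ∈ univ) => inner i, sum_ite_mem, univ_inter, if_pos hm,
      Gop, Mop, map_sum, mul_sum]
    refine sum_congr rfl fun i _ => ?_
    simp only [map_mul, map_intCast]
    ring
  · simp [c4, hm]

lemma Fop_repr : Fop a x m T
    = ∑ i, ∑ W : Finset (Fin n),
        ((c1 m T i W : ℂ) * (a i * x W)
          + (c3 T i W : ℂ) * ((starRingEnd ℂ) (a i) * x W)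
          + (c4 m T i W : ℂ) * ((starRingEnd ℂ) (a i) * (starRingEnd ℂ) (x W))) := by
  rw [Fop, repr3 a x T, repr1 a x m T, repr4 a x m T]
  simp only [sum_add_distrib]
  ring

lemma Fop_repr_sub (P : Finset (Fin n) → Prop) [DecidablePred P]
    (hx0 : ∀ W, ¬ P W → x W = 0) : Fop a x m T
    = ∑ i, ∑ S : {S : Finset (Fin n) // P S},
        ((c1 m T i S.1 : ℂ) * (a i * x S.1)
          + (c3 T i S.1 : ℂ) * ((starRingEnd ℂ) (a i) * x S.1)
          + (c4 m T i S.1 : ℂ) * ((starRingEnd ℂ) (a i) * (starRingEnd ℂ) (x S.1))) := by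
  rw [Fop_repr a x m T]
  refine sum_congr rfl fun i _ => ?_
  rw [← sum_subtype (univ.filter P) (by simp) (fun W =>
      ((c1 m T i W : ℂ) * (a i * x W)
        + (c3 T i W : ℂ) * ((starRingEnd ℂ) (a i) * x W)
        + (c4 m T i W : ℂ) * ((starRingEnd ℂ) (a i) * (starRingEnd ℂ) (x W))))]
  refine (sum_subset (filter_subset _ _) fun W _ hW => ?_).symm
  have hxz : x W = 0 := hx0 W (fun h => hW (mem_filter.2 ⟨mem_univ _, h⟩))
  rw [hxz]
  simp

def Pdom (n m k : ℕ) (S : Finset (Fin n)) : Prop := m + 1 ≤ S.card + k ∧ S.card ≤ m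
def Ptgt (n m k : ℕ) (T : Finset (Fin n)) : Prop := m + 1 ≤ T.card + (k + 1) ∧ T.card ≤ m
instance (m k : ℕ) : DecidablePred (Pdom n m k) := fun S => by unfold Pdom; infer_instance
instance (m k : ℕ) : DecidablePred (Ptgt n m k) := fun T => by unfold Ptgt; infer_instance
def lam (n m k : ℕ) :
    ({T : Finset (Fin n) // Ptgt n m k T} ⊕ {T : Finset (Fin n) // Ptgt n m k T}) →
    (Fin n ⊕ Fin n) →
    ({S : Finset (Fin n) // Pdom n m k S} ⊕ {S : Finset (Fin n) // Pdom n m k S}) → ℤ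
  | .inl T, .inl i, .inl S => c1 m T.1 i S.1 + c3 T.1 i S.1 + c4 m T.1 i S.1
  | .inl T, .inr i, .inr S => -c1 m T.1 i S.1 + c3 T.1 i S.1 - c4 m T.1 i S.1
  | .inr T, .inl i, .inr S => c1 m T.1 i S.1 + c3 T.1 i S.1 - c4 m T.1 i S.1
  | .inr T, .inr i, .inl S => c1 m T.1 i S.1 - c3 T.1 i S.1 - c4 m T.1 i S.1
  | _, _, _ => 0
section realpart
variable (m k : ℕ) (u : Fin n ⊕ Fin n → ℝ)
  (v : {S : Finset (Fin n) // Pdom n m k S} ⊕ {S : Finset (Fin n) // Pdom n m k S} → ℝ)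

noncomputable def aC : Fin n → ℂ := fun i =>
  (u (Sum.inl i) : ℂ) + (u (Sum.inr i) : ℂ) * Complex.I
noncomputable def xe : Finset (Fin n) → ℂ := fun W =>
  if h : Pdom n m k W then (v (Sum.inl ⟨W, h⟩) : ℂ) + (v (Sum.inr ⟨W, h⟩) : ℂ) * Complex.I
  else 0

lemma re_formula (T : {T : Finset (Fin n) // Ptgt n m k T}) :
    (∑ i, ∑ S : {S : Finset (Fin n) // Pdom n m k S},
        ((c1 m T.1 i S.1 : ℂ) * (aC u i * xe m k v S.1)
          + (c3 T.1 i S.1 : ℂ) * ((starRingEnd ℂ) (aC u i) * xe m k v S.1)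
          + (c4 m T.1 i S.1 : ℂ) *
              ((starRingEnd ℂ) (aC u i) * (starRingEnd ℂ) (xe m k v S.1)))).re
      = ∑ i', ∑ j', (lam n m k (Sum.inl T) i' j' : ℝ) * u i' * v j' := by
  rw [Fintype.sum_sum_type (fun i' => ∑ j', (lam n m k (Sum.inl T) i' j' : ℝ) * u i' * v j')]
  rw [Complex.re_sum]
  rw [← sum_add_distrib]
  refine sum_congr rfl fun i _ => ?_
  rw [Complex.re_sum]
  rw [Fintype.sum_sum_type (fun j' => (lam n m k (Sum.inl T) (Sum.inl i) j' : ℝ) * u (Sum.inl i) * v j'),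
    Fintype.sum_sum_type (fun j' => (lam n m k (Sum.inl T) (Sum.inr i) j' : ℝ) * u (Sum.inr i) * v j')]
  rw [show (∑ S : {S : Finset (Fin n) // Pdom n m k S},
        (lam n m k (Sum.inl T) (Sum.inl i) (Sum.inr S) : ℝ) * u (Sum.inl i) * v (Sum.inr S)) = 0
      from sum_eq_zero fun S _ => by simp [lam]]
  rw [show (∑ S : {S : Finset (Fin n) // Pdom n m k S},
        (lam n m k (Sum.inl T) (Sum.inr i) (Sum.inl S) : ℝ) * u (Sum.inr i) * v (Sum.inl S)) = 0
      from sum_eq_zero fun S _ => by simp [lam]]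
  rw [add_zero, zero_add, ← sum_add_distrib]
  refine sum_congr rfl fun S _ => ?_
  have hxv : xe m k v S.1
      = (v (Sum.inl S) : ℂ) + (v (Sum.inr S) : ℂ) * Complex.I := by
    rw [xe, dif_pos S.2]
  rw [hxv, aC]
  simp only [lam, map_add, map_mul, Complex.conj_I, Complex.conj_ofReal, Complex.add_re,
    Complex.mul_re, Complex.ofReal_re, Complex.ofReal_im, Complex.I_re, Complex.I_im,
    Complex.add_im, Complex.mul_im, Complex.intCast_re, Complex.intCast_im,
    Complex.neg_re, Complex.neg_im, mul_neg, neg_mul]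
  push_cast
  ring

lemma im_formula (T : {T : Finset (Fin n) // Ptgt n m k T}) :
    (∑ i, ∑ S : {S : Finset (Fin n) // Pdom n m k S},
        ((c1 m T.1 i S.1 : ℂ) * (aC u i * xe m k v S.1)
          + (c3 T.1 i S.1 : ℂ) * ((starRingEnd ℂ) (aC u i) * xe m k v S.1)
          + (c4 m T.1 i S.1 : ℂ) *
              ((starRingEnd ℂ) (aC u i) * (starRingEnd ℂ) (xe m k v S.1)))).im
      = ∑ i', ∑ j', (lam n m k (Sum.inr T) i' j' : ℝ) * u i' * v j' := by
  rw [Fintype.sum_sum_type (fun i' => ∑ j', (lam n m k (Sum.inr T) i' j' : ℝ) * u i' * v j')]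
  rw [Complex.im_sum]
  rw [← sum_add_distrib]
  refine sum_congr rfl fun i _ => ?_
  rw [Complex.im_sum]
  rw [Fintype.sum_sum_type (fun j' => (lam n m k (Sum.inr T) (Sum.inl i) j' : ℝ) * u (Sum.inl i) * v j'),
    Fintype.sum_sum_type (fun j' => (lam n m k (Sum.inr T) (Sum.inr i) j' : ℝ) * u (Sum.inr i) * v j')]
  rw [show (∑ S : {S : Finset (Fin n) // Pdom n m k S},
        (lam n m k (Sum.inr T) (Sum.inl i) (Sum.inl S) : ℝ) * u (Sum.inl i) * v (Sum.inl S)) = 0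
      from sum_eq_zero fun S _ => by simp [lam]]
  rw [show (∑ S : {S : Finset (Fin n) // Pdom n m k S},
        (lam n m k (Sum.inr T) (Sum.inr i) (Sum.inr S) : ℝ) * u (Sum.inr i) * v (Sum.inr S)) = 0
      from sum_eq_zero fun S _ => by simp [lam]]
  rw [zero_add, add_zero, ← sum_add_distrib]
  refine sum_congr rfl fun S _ => ?_
  have hxv : xe m k v S.1
      = (v (Sum.inl S) : ℂ) + (v (Sum.inr S) : ℂ) * Complex.I := by
    rw [xe, dif_pos S.2]
  rw [hxv, aC]
  simp only [lam, map_add, map_mul, Complex.conj_I, Complex.conj_ofReal, Complex.add_re,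
    Complex.mul_re, Complex.ofReal_re, Complex.ofReal_im, Complex.I_re, Complex.I_im,
    Complex.add_im, Complex.mul_im, Complex.intCast_re, Complex.intCast_im,
    Complex.neg_re, Complex.neg_im, mul_neg, neg_mul]
  push_cast
  ring
end realpart

theorem real_identity (m k : ℕ) (hn : n = 2 * m + 1) (u : Fin n ⊕ Fin n → ℝ)
    (v : {S : Finset (Fin n) // Pdom n m k S} ⊕ {S : Finset (Fin n) // Pdom n m k S} → ℝ) :
    (∑ i', u i' ^ 2) * (∑ j', v j' ^ 2)
      = ∑ t', (∑ i', ∑ j', (lam n m k t' i' j' : ℝ) * u i' * v j') ^ 2 := by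
  classical
  have hsupp : Supp (xe m k v) m k := by
    intro S hS
    by_cases h : Pdom n m k S
    · exact h
    · rw [xe, dif_neg h] at hS
      exact absurd rfl hS
  have hkey := key_identity (a := aC u) (x := xe m k v) (k := k) hn hsupp
  simp only [Complex.mul_conj] at hkey
  have hkey' : ∑ T : Finset (Fin n), Complex.normSq (Fop (aC u) (xe m k v) m T)
      = (∑ i, Complex.normSq (aC u i)) *
          (∑ S : Finset (Fin n), Complex.normSq (xe m k v S)) := by
    exact_mod_cast hkey
  have hA : (∑ i', u i' ^ 2) = ∑ i, Complex.normSq (aC u i) := by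
    rw [Fintype.sum_sum_type (fun i' => u i' ^ 2), ← sum_add_distrib]
    refine sum_congr rfl fun i _ => ?_
    rw [aC]
    simp only [Complex.normSq_apply, Complex.add_re, Complex.add_im, Complex.mul_re,
      Complex.mul_im, Complex.ofReal_re, Complex.ofReal_im, Complex.I_re, Complex.I_im]
    ring
  have hB : (∑ j', v j' ^ 2) = ∑ S : Finset (Fin n), Complex.normSq (xe m k v S) := by
    rw [show (∑ S : Finset (Fin n), Complex.normSq (xe m k v S))
        = ∑ S ∈ univ.filter (Pdom n m k), Complex.normSq (xe m k v S) from
      (sum_subset (filter_subset _ _) fun W _ hW => by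
        have : ¬ Pdom n m k W := fun h => hW (mem_filter.2 ⟨mem_univ _, h⟩)
        rw [xe, dif_neg this, Complex.normSq_zero]).symm]
    rw [sum_subtype (p := Pdom n m k) (univ.filter (Pdom n m k)) (fun S => by simp)
      (fun S => Complex.normSq (xe m k v S))]
    rw [Fintype.sum_sum_type (fun j' => v j' ^ 2), ← sum_add_distrib]
    refine sum_congr rfl fun S _ => ?_
    rw [show xe m k v S.1 = (v (Sum.inl S) : ℂ) + (v (Sum.inr S) : ℂ) * Complex.I from
      by rw [xe, dif_pos S.2]]
    simp only [Complex.normSq_apply, Complex.add_re, Complex.add_im, Complex.mul_re,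
      Complex.mul_im, Complex.ofReal_re, Complex.ofReal_im, Complex.I_re, Complex.I_im]
    ring
  have hC : ∑ T : Finset (Fin n), Complex.normSq (Fop (aC u) (xe m k v) m T)
      = ∑ t', (∑ i', ∑ j', (lam n m k t' i' j' : ℝ) * u i' * v j') ^ 2 := by
    rw [show (∑ T : Finset (Fin n), Complex.normSq (Fop (aC u) (xe m k v) m T))
        = ∑ T ∈ univ.filter (Ptgt n m k), Complex.normSq (Fop (aC u) (xe m k v) m T) from
      (sum_subset (filter_subset _ _) fun W _ hW => by
        have hnp : ¬ Ptgt n m k W := fun h => hW (mem_filter.2 ⟨mem_univ _, h⟩)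
        have : ¬(m ≤ W.card + k ∧ W.card ≤ m) := by
          rw [Ptgt] at hnp
          omega
        rw [Fop_eq_zero hsupp this, Complex.normSq_zero]).symm]
    rw [sum_subtype (p := Ptgt n m k) (univ.filter (Ptgt n m k)) (fun T => by simp)
      (fun T => Complex.normSq (Fop (aC u) (xe m k v) m T))]
    rw [Fintype.sum_sum_type (fun t' =>
      (∑ i', ∑ j', (lam n m k t' i' j' : ℝ) * u i' * v j') ^ 2), ← sum_add_distrib]
    refine sum_congr rfl fun T _ => ?_
    rw [Fop_repr_sub (aC u) (xe m k v) m T.1 (Pdom n m k)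
      (fun W hW => by rw [xe, dif_neg hW])]
    rw [Complex.normSq_apply, re_formula m k u v T, im_formula m k u v T]
    ring
  rw [hA, hB, ← hkey', hC]

lemma isSquareIdentity_of (I J K : Type) [Fintype I] [Fintype J] [Fintype K]
    (lam : K → I → J → ℤ)
    (h : ∀ (u : I → ℝ) (v : J → ℝ), (∑ i, u i ^ 2) * (∑ j, v j ^ 2)
      = ∑ t, (∑ i, ∑ j, (lam t i j : ℝ) * u i * v j) ^ 2) :
    IsSquareIdentity (Fintype.card I) (Fintype.card J) (Fintype.card K) := by
  classical
  set e1 := Fintype.equivFin I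
  set e2 := Fintype.equivFin J
  set e3 := Fintype.equivFin K
  refine ⟨fun t i j => lam (e3.symm t) (e1.symm i) (e2.symm j), fun u v => ?_⟩
  have h0 := h (fun i => u (e1 i)) (fun j => v (e2 j))
  calc (∑ i, u i ^ 2) * (∑ j, v j ^ 2)
      = (∑ i : I, u (e1 i) ^ 2) * (∑ j : J, v (e2 j) ^ 2) := by
        rw [Equiv.sum_comp e1 (fun b => u b ^ 2), Equiv.sum_comp e2 (fun b => v b ^ 2)]
    _ = ∑ t : K, (∑ i : I, ∑ j : J, (lam t i j : ℝ) * u (e1 i) * v (e2 j)) ^ 2 := h0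
    _ = ∑ t : K, (∑ i, ∑ j, (lam t (e1.symm i) (e2.symm j) : ℝ) * u i * v j) ^ 2 := by
        refine sum_congr rfl fun t _ => ?_
        congr 1
        rw [← Equiv.sum_comp e1 (fun i => ∑ j, (lam t (e1.symm i) (e2.symm j) : ℝ)
          * u i * v j)]
        refine sum_congr rfl fun i _ => ?_
        rw [← Equiv.sum_comp e2 (fun j => (lam t (e1.symm (e1 i)) (e2.symm j) : ℝ)
          * u (e1 i) * v j)]
        simp only [Equiv.symm_apply_apply]
    _ = ∑ t, (∑ i, ∑ j, (lam (e3.symm t) (e1.symm i) (e2.symm j) : ℝ) * u i * v j) ^ 2 := by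
        rw [← Equiv.sum_comp e3 (fun t => (∑ i, ∑ j,
          (lam (e3.symm t) (e1.symm i) (e2.symm j) : ℝ) * u i * v j) ^ 2)]
        simp only [Equiv.symm_apply_apply]

variable {n : ℕ}

lemma card_filter_card_prop (P : ℕ → Prop) [DecidablePred P] :
    ((univ : Finset (Finset (Fin n))).filter (fun S => P S.card)).card
      = ∑ c ∈ (range (n + 1)).filter P, n.choose c := by
  classical
  have hU : (univ : Finset (Finset (Fin n))).filter (fun S => P S.card)
      = ((range (n + 1)).filter P).biUnion (fun c => powersetCard c univ) := by
    ext S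
    simp only [mem_filter, mem_biUnion, mem_powersetCard, mem_range, mem_univ, true_and]
    constructor
    · intro hP
      exact ⟨S.card, ⟨by have := card_le_univ S; simp at this; omega, hP⟩,
        subset_univ _, rfl⟩
    · rintro ⟨c, ⟨-, hP⟩, -, rfl⟩
      exact hP
  rw [hU, card_biUnion]
  · refine sum_congr rfl fun c _ => ?_
    rw [card_powersetCard, card_univ, Fintype.card_fin]
  · intro c1 h1 c2 h2 hne
    refine disjoint_left.2 fun S hS1 hS2 => ?_
    rw [mem_powersetCard] at hS1 hS2
    exact hne (hS1.2 ▸ hS2.2)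

lemma card_subtype_band (lo hi : ℕ) (hhi : hi ≤ n) :
    Fintype.card {S : Finset (Fin n) // lo ≤ S.card ∧ S.card ≤ hi}
      = ∑ c ∈ (range (n + 1)).filter (fun c => lo ≤ c ∧ c ≤ hi), n.choose c := by
  classical
  rw [Fintype.card_subtype]
  exact card_filter_card_prop (fun c => lo ≤ c ∧ c ≤ hi)


lemma card_band (m j : ℕ) (hj : j ≤ m + 1) (hmn : m ≤ n)
    (P : Finset (Fin n) → Prop) [DecidablePred P]
    (hP : ∀ S, P S ↔ (m + 1 ≤ S.card + j ∧ S.card ≤ m)) :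
    Fintype.card {S : Finset (Fin n) // P S} = ∑ i ∈ range j, n.choose (m - i) := by
  classical
  rw [Fintype.card_subtype]
  have hfe : (univ : Finset (Finset (Fin n))).filter P
      = (univ : Finset (Finset (Fin n))).filter
          (fun S => m + 1 ≤ S.card + j ∧ S.card ≤ m) := by
    refine filter_congr fun S _ => ?_
    simp [hP S]
  rw [hfe, card_filter_card_prop (fun c => m + 1 ≤ c + j ∧ c ≤ m)]
  refine sum_nbij' (fun c => m - c) (fun i => m - i) ?_ ?_ ?_ ?_ ?_
  · intro c hc
    simp only [mem_filter, mem_range] at hc ⊢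
    omega
  · intro i hi
    simp only [mem_filter, mem_range] at hi ⊢
    omega
  · intro c hc
    simp only [mem_filter, mem_range] at hc
    omega
  · intro i hi
    simp only [mem_range] at hi
    omega
  · intro c hc
    simp only [mem_filter, mem_range] at hc
    have h : m - (m - c) = c := by omega
    rw [h]

end SqId

/-- Theorem 2.3 (i): if `n ≡ 1 (mod 4)`, `m = (n−1)/2` and `1 ≤ k ≤ m`, there is
a square identity of size `[2n, Σ_{i=0}^{k−1} 2·C(n,m−i), Σ_{i=0}^{k} 2·C(n,m−i)]`. -/
theorem square_identity_binomial (n m k : ℕ) (hn : 0 < n) (hn4 : n % 4 = 1)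
    (hm : m = (n - 1) / 2) (hk : 1 ≤ k) (hkm : k ≤ m) :
    IsSquareIdentity (2 * n)
      (∑ i ∈ Finset.range k, 2 * n.choose (m - i))
      (∑ i ∈ Finset.range (k + 1), 2 * n.choose (m - i)) := by
  classical
  have hn2 : n = 2 * m + 1 := by omega
  have h2n : 2 * n = Fintype.card (Fin n ⊕ Fin n) := by
    rw [Fintype.card_sum, Fintype.card_fin]
    ring
  have hcdom : Fintype.card {S : Finset (Fin n) // SqId.Pdom n m k S}
      = ∑ i ∈ Finset.range k, n.choose (m - i) :=
    SqId.card_band m k (by omega) (by omega) (SqId.Pdom n m k) (fun S => Iff.rfl)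
  have hctgt : Fintype.card {T : Finset (Fin n) // SqId.Ptgt n m k T}
      = ∑ i ∈ Finset.range (k + 1), n.choose (m - i) :=
    SqId.card_band m (k + 1) (by omega) (by omega) (SqId.Ptgt n m k) (fun S => Iff.rfl)
  have hs : (∑ i ∈ Finset.range k, 2 * n.choose (m - i))
      = Fintype.card ({S : Finset (Fin n) // SqId.Pdom n m k S}
          ⊕ {S : Finset (Fin n) // SqId.Pdom n m k S}) := by
    rw [Fintype.card_sum, hcdom, ← two_mul, ← Finset.mul_sum]
  have hN : (∑ i ∈ Finset.range (k + 1), 2 * n.choose (m - i))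
      = Fintype.card ({T : Finset (Fin n) // SqId.Ptgt n m k T}
          ⊕ {T : Finset (Fin n) // SqId.Ptgt n m k T}) := by
    rw [Fintype.card_sum, hctgt, ← two_mul, ← Finset.mul_sum]
  rw [h2n, hs, hN]
  exact SqId.isSquareIdentity_of _ _ _ (SqId.lam n m k)
    (fun u v => SqId.real_identity m k hn2 u v)
end

section
/- Let n be a positive integer with n ≡ 3 (mod 4), set m = (n−1)/2, and let k be an integer with 1 ≤ k ≤ m. Then there exists a square identity of size [2n+2, s, N] with s = Σ_{i=0}^{k−1} 2·C(n, m−i) and N = Σ_{i=0}^{k} 2·C(n, m−i). -/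
namespace SqIdAux

open Finset

/-! ### The sign character on `ZMod 2` -/

def chi (t : ZMod 2) : ℤ := if t = 0 then 1 else -1
lemma chi_add (s t : ZMod 2) : chi (s + t) = chi s * chi t := by revert s t; decide
lemma chi_sq (t : ZMod 2) : chi t * chi t = 1 := by revert t; decide
lemma chi_flip (u v : ZMod 2) (h : u + v = 1) : chi u + chi v = 0 := by revert u v; decide

variable {n : ℕ}

/-! ### Weights of vectors in `(ZMod 2)ⁿ` -/

def wt (x : Fin n → ZMod 2) : ℕ := (univ.filter fun i => x i = 1).card

def supp (d : Fin n → ZMod 2) : Finset (Fin n) := univ.filter fun i => d i = 1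

lemma zmod2_cases (t : ZMod 2) : t = 0 ∨ t = 1 := by revert t; decide

lemma card_supp (d : Fin n → ZMod 2) : (supp d).card = wt d := rfl

lemma addv_self (x : Fin n → ZMod 2) : x + x = 0 := by
  funext i
  have : ∀ t : ZMod 2, t + t = 0 := by decide
  simpa using this (x i)

lemma cancel_left (x y : Fin n → ZMod 2) : x + (x + y) = y := by
  rw [← add_assoc, addv_self, zero_add]

lemma cross {x y x' y' : Fin n → ZMod 2} (h : x + y = x' + y') : x + y' = x' + y := by
  have h1 : y' = x' + (x + y) := by rw [h, cancel_left]
  calc x + y' = (x + x) + (x' + y) := by rw [h1]; ring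
    _ = x' + y := by rw [addv_self, zero_add]

lemma wt_add_le (x y : Fin n → ZMod 2) : wt (x + y) ≤ wt x + wt y := by
  classical
  have hsub : (univ.filter fun i => (x + y) i = 1) ⊆
      (univ.filter fun i => x i = 1) ∪ (univ.filter fun i => y i = 1) := by
    intro i hi
    simp only [mem_filter, mem_univ, true_and, Pi.add_apply] at hi
    simp only [mem_union, mem_filter, mem_univ, true_and]
    rcases zmod2_cases (x i) with h1 | h1 <;> rcases zmod2_cases (y i) with h2 | h2 <;>
      simp_all
  calc wt (x + y) ≤ _ := Finset.card_le_card hsub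
    _ ≤ wt x + wt y := Finset.card_union_le _ _

lemma wt_eq_zero_iff (x : Fin n → ZMod 2) : wt x = 0 ↔ x = 0 := by
  constructor
  · intro h
    have he : (univ.filter fun i => x i = 1) = ∅ := Finset.card_eq_zero.mp h
    funext i
    rcases zmod2_cases (x i) with h1 | h1
    · simpa using h1
    · exfalso
      have : i ∈ (univ.filter fun i => x i = 1) := by simp [h1]
      rw [he] at this
      exact absurd this (Finset.notMem_empty i)
  · intro h; subst h
    simp only [wt]
    rw [Finset.card_eq_zero, Finset.filter_eq_empty_iff]
    intro i _
    simp

def allOne (n : ℕ) : Fin n → ZMod 2 := fun _ => 1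

lemma wt_allOne_add (x : Fin n → ZMod 2) : wt (allOne n + x) = n - wt x := by
  classical
  have h1 : (univ.filter fun i => (allOne n + x) i = 1) = (univ.filter fun i => ¬ (x i = 1)) := by
    ext i
    simp only [mem_filter, mem_univ, true_and, Pi.add_apply, allOne]
    rcases zmod2_cases (x i) with h | h <;> simp [h]
  have h2 := Finset.card_filter_add_card_filter_not (s := (univ : Finset (Fin n)))
      (p := fun i => x i = 1)
  simp only [Finset.card_univ, Fintype.card_fin] at h2
  simp only [wt, h1]
  omega

lemma wt_le_of_le (x y : Fin n → ZMod 2) : wt x ≤ wt (x + y) + wt y := by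
  have h : x = (x + y) + y := by
    rw [add_assoc, addv_self, add_zero]
  calc wt x = wt ((x + y) + y) := by rw [← h]
    _ ≤ wt (x + y) + wt y := wt_add_le _ _

lemma wt_add_le_compl (x y : Fin n → ZMod 2) :
    wt (x + y) ≤ (n - wt x) + (n - wt y) := by
  have heq : x + y = (allOne n + x) + (allOne n + y) := by
    have h : (allOne n + x) + (allOne n + y) = (allOne n + allOne n) + (x + y) := by ring
    rw [h, addv_self, zero_add]
  calc wt (x + y) = wt ((allOne n + x) + (allOne n + y)) := by rw [← heq]
    _ ≤ wt (allOne n + x) + wt (allOne n + y) := wt_add_le _ _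
    _ = (n - wt x) + (n - wt y) := by rw [wt_allOne_add, wt_allOne_add]

lemma wt_le_n (d : Fin n → ZMod 2) : wt d ≤ n := by
  have := Finset.card_le_univ (univ.filter fun i => d i = 1)
  simpa [wt] using this

/-! ### Counting strict pairs inside a finset -/

def pairsIn (T : Finset (Fin n)) : Finset (Fin n × Fin n) :=
  univ.filter fun p => p.1 < p.2 ∧ p.1 ∈ T ∧ p.2 ∈ T

lemma card_pairsIn (T : Finset (Fin n)) : (pairsIn T).card = T.card.choose 2 := by
  classical
  induction T using Finset.induction_on_max with
  | empty => simp [pairsIn]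
  | insert a T hmax ih =>
    have haT : a ∉ T := fun h => lt_irrefl a (hmax a h)
    have hsplit : pairsIn (insert a T) = pairsIn T ∪ T.image (fun t => (t, a)) := by
      ext ⟨p1, p2⟩
      simp only [pairsIn, mem_filter, mem_univ, true_and, mem_union, mem_insert, mem_image]
      constructor
      · rintro ⟨hlt, (h1 | h1), (h2 | h2)⟩
        · subst h1; subst h2; exact absurd hlt (lt_irrefl _)
        · subst h1; exact absurd (hmax _ h2) (not_lt.mpr (le_of_lt hlt))
        · subst h2; exact Or.inr ⟨p1, h1, rfl⟩
        · exact Or.inl ⟨hlt, h1, h2⟩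
      · rintro (⟨hlt, h1, h2⟩ | ⟨t, ht, heq⟩)
        · exact ⟨hlt, Or.inr h1, Or.inr h2⟩
        · obtain ⟨h1, h2⟩ := Prod.mk.injEq .. ▸ heq
          subst h1; subst h2
          exact ⟨hmax _ ht, Or.inr ht, Or.inl rfl⟩
    have hdisj : Disjoint (pairsIn T) (T.image (fun t => (t, a))) := by
      rw [Finset.disjoint_left]
      rintro ⟨p1, p2⟩ hp hq
      simp only [pairsIn, mem_filter] at hp
      simp only [mem_image] at hq
      obtain ⟨t, ht, heq⟩ := hq
      obtain ⟨h1, h2⟩ := Prod.mk.injEq .. ▸ heq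
      subst h1; subst h2
      exact haT hp.2.2.2
    have hinj : (T.image (fun t => (t, a))).card = T.card :=
      Finset.card_image_of_injective _ (fun x y h => (Prod.mk.injEq .. ▸ h).1)
    rw [hsplit, Finset.card_union_of_disjoint hdisj, ih, hinj,
      Finset.card_insert_of_notMem haT]
    have : (T.card + 1).choose 2 = T.card.choose 2 + T.card := by
      rw [show (2:ℕ) = 1 + 1 from rfl, Nat.choose_succ_succ, Nat.choose_one_right]
      simp only [Nat.succ_eq_add_one]
      omega
    omega

/-! ### The twisting function and its polarization -/

def C3 (n : ℕ) : Finset (Fin n × Fin n) :=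
  univ.filter fun p => (0 : ℕ) < (p.1 : ℕ) ∧ p.1 < p.2

def L2 (n : ℕ) : Finset (Fin n × Fin n) :=
  univ.filter fun p => p.1 ≤ p.2

def ff [NeZero n] (x y : Fin n → ZMod 2) : ZMod 2 :=
  (∑ p ∈ C3 n, (x 0 * x p.1 * y p.2 + x 0 * y p.1 * x p.2 + y 0 * x p.1 * x p.2))
  + ∑ p ∈ L2 n, x p.1 * y p.2

def gam [NeZero n] (d : Fin n → ZMod 2) : ZMod 2 :=
  (∑ p ∈ C3 n, d 0 * d p.1 * d p.2) + ∑ p ∈ L2 n, d p.1 * d p.2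

lemma polar [NeZero n] (x y d : Fin n → ZMod 2) :
    ff x y + ff (x + d) y + ff x (y + d) + ff (x + d) (y + d) = gam d := by
  unfold ff gam
  simp only [Pi.add_apply]
  rw [show ∀ A B C D E F G H : ZMod 2,
      (A + B) + (C + D) + (E + F) + (G + H) = (A + C + E + G) + (B + D + F + H) from
      fun _ _ _ _ _ _ _ _ => by ring]
  rw [← Finset.sum_add_distrib, ← Finset.sum_add_distrib, ← Finset.sum_add_distrib,
    ← Finset.sum_add_distrib, ← Finset.sum_add_distrib, ← Finset.sum_add_distrib]
  congr 1
  · refine Finset.sum_congr rfl fun p _ => ?_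
    have key : ∀ x0 xj xk y0 yj yk d0 dj dk : ZMod 2,
        (x0*xj*yk + x0*yj*xk + y0*xj*xk)
        + ((x0+d0)*(xj+dj)*yk + (x0+d0)*yj*(xk+dk) + y0*(xj+dj)*(xk+dk))
        + (x0*xj*(yk+dk) + x0*(yj+dj)*xk + (y0+d0)*xj*xk)
        + ((x0+d0)*(xj+dj)*(yk+dk) + (x0+d0)*(yj+dj)*(xk+dk) + (y0+d0)*(xj+dj)*(xk+dk))
        = d0*dj*dk := by decide
    exact key (x 0) (x p.1) (x p.2) (y 0) (y p.1) (y p.2) (d 0) (d p.1) (d p.2)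
  · refine Finset.sum_congr rfl fun p _ => ?_
    have key : ∀ xj yk dj dk : ZMod 2,
        xj*yk + (xj+dj)*yk + xj*(yk+dk) + (xj+dj)*(yk+dk) = dj*dk := by decide
    exact key (x p.1) (y p.2) (d p.1) (d p.2)

/-! ### Evaluation of `gam` via weights -/

lemma mul_ind (d : Fin n → ZMod 2) (p : Fin n × Fin n) :
    d p.1 * d p.2 = if d p.1 = 1 ∧ d p.2 = 1 then 1 else 0 := by
  rcases zmod2_cases (d p.1) with h1 | h1 <;> rcases zmod2_cases (d p.2) with h2 | h2 <;>
    simp [h1, h2]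

lemma sum_to_card (d : Fin n → ZMod 2) (P : Finset (Fin n × Fin n)) :
    ∑ p ∈ P, d p.1 * d p.2
      = (((P.filter fun p => d p.1 = 1 ∧ d p.2 = 1).card : ℕ) : ZMod 2) := by
  rw [Finset.sum_congr rfl fun p _ => mul_ind d p]
  rw [Finset.sum_boole]

lemma filt_L2 (d : Fin n → ZMod 2) :
    (L2 n).filter (fun p => d p.1 = 1 ∧ d p.2 = 1)
      = pairsIn (supp d) ∪ (supp d).image (fun i => (i, i)) := by
  ext ⟨p1, p2⟩
  simp only [L2, pairsIn, supp, mem_filter, mem_union, mem_image, mem_univ, true_and]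
  constructor
  · rintro ⟨hle, h1, h2⟩
    rcases lt_or_eq_of_le hle with hlt | heq
    · exact Or.inl ⟨hlt, h1, h2⟩
    · exact Or.inr ⟨p1, h1, by rw [heq]⟩
  · rintro (⟨hlt, h1, h2⟩ | ⟨t, ht, heq⟩)
    · exact ⟨le_of_lt hlt, h1, h2⟩
    · obtain ⟨e1, e2⟩ := Prod.mk.injEq .. ▸ heq
      subst e1; subst e2; exact ⟨le_refl _, ht, ht⟩

lemma filt_C3 [NeZero n] (d : Fin n → ZMod 2) :
    (C3 n).filter (fun p => d p.1 = 1 ∧ d p.2 = 1) = pairsIn ((supp d).erase 0) := by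
  ext ⟨p1, p2⟩
  simp only [C3, pairsIn, supp, mem_filter, mem_univ, true_and, mem_erase]
  constructor
  · rintro ⟨⟨hpos, hlt⟩, h1, h2⟩
    have hp1 : p1 ≠ 0 := by
      intro h; rw [h] at hpos; simp at hpos
    have hp2 : p2 ≠ 0 := by
      intro h; rw [h] at hlt
      have : (p1 : ℕ) < ((0 : Fin n) : ℕ) := hlt
      have h0 : ((0 : Fin n) : ℕ) = 0 := rfl
      omega
    exact ⟨hlt, ⟨hp1, h1⟩, ⟨hp2, h2⟩⟩
  · rintro ⟨hlt, ⟨hp1, h1⟩, ⟨hp2, h2⟩⟩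
    refine ⟨⟨?_, hlt⟩, h1, h2⟩
    have : (p1 : ℕ) ≠ 0 := by
      intro h
      apply hp1
      apply Fin.ext
      simpa using h
    omega

lemma gam_eval [NeZero n] (d : Fin n → ZMod 2) :
    gam d = d 0 * ((((supp d).erase 0).card.choose 2 : ℕ) : ZMod 2)
      + (((wt d).choose 2 + wt d : ℕ) : ZMod 2) := by
  unfold gam
  have h1 : ∑ p ∈ C3 n, d 0 * d p.1 * d p.2 = d 0 * ∑ p ∈ C3 n, d p.1 * d p.2 := by
    rw [Finset.mul_sum]
    exact Finset.sum_congr rfl fun p _ => mul_assoc _ _ _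
  rw [h1, sum_to_card d (C3 n), sum_to_card d (L2 n), filt_C3, filt_L2,
    card_pairsIn]
  congr 1
  have hdisj : Disjoint (pairsIn (supp d)) ((supp d).image (fun i => (i, i))) := by
    rw [Finset.disjoint_left]
    rintro ⟨p1, p2⟩ hp hq
    simp only [pairsIn, mem_filter] at hp
    simp only [mem_image] at hq
    obtain ⟨t, _, heq⟩ := hq
    obtain ⟨e1, e2⟩ := Prod.mk.injEq .. ▸ heq
    subst e1; subst e2
    exact lt_irrefl _ hp.2.1
  rw [Finset.card_union_of_disjoint hdisj, card_pairsIn,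
    Finset.card_image_of_injective _ (fun a b h => (Prod.mk.injEq .. ▸ h).1),
    card_supp]

lemma cast2_one {N : ℕ} (h : N % 2 = 1) : ((N : ℕ) : ZMod 2) = 1 := by
  rw [← ZMod.natCast_mod N 2, h, Nat.cast_one]

lemma ch2 : ∀ w : ℕ, 2 * (w.choose 2 % 2) + w % 2 = w % 4 := by
  intro w
  induction w with
  | zero => rfl
  | succ v ih =>
    have hstep : (v+1).choose 2 = v.choose 1 + v.choose 2 := Nat.choose_succ_succ v 1
    rw [Nat.choose_one_right] at hstep
    set C := v.choose 2 with hC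
    have hc : (v % 4 = 0 ∧ C % 2 = 0) ∨ (v % 4 = 1 ∧ C % 2 = 0)
        ∨ (v % 4 = 2 ∧ C % 2 = 1) ∨ (v % 4 = 3 ∧ C % 2 = 1) := by omega
    rcases hc with ⟨h1, h2⟩ | ⟨h1, h2⟩ | ⟨h1, h2⟩ | ⟨h1, h2⟩ <;> omega

lemma gam_one [NeZero n] (hn4 : n % 4 = 3) (d : Fin n → ZMod 2)
    (hw : (1 ≤ wt d ∧ wt d ≤ 2) ∨ n - 2 ≤ wt d) : gam d = 1 := by
  have hwn : wt d ≤ n := wt_le_n d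
  have hn3 : 3 ≤ n := by omega
  rw [gam_eval]
  rcases zmod2_cases (d 0) with h0 | h0
  · have h0m : (0 : Fin n) ∉ supp d := by simp [supp, h0]
    have hlt : wt d < n := by
      have hne : supp d ≠ univ := fun h => h0m (h ▸ mem_univ 0)
      have := Finset.card_lt_card (Finset.ssubset_univ_iff.mpr hne)
      simpa [card_supp] using this
    rw [h0, zero_mul, zero_add]
    apply cast2_one
    have hp := ch2 (wt d)
    have ha : wt d % 4 = 1 ∨ wt d % 4 = 2 := by
      rcases hw with hw | hw <;> omega
    rcases ha with ha | ha <;> omega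
  · have h0m : (0 : Fin n) ∈ supp d := by simp [supp, h0]
    have hw1 : 1 ≤ wt d := by
      rw [← card_supp]
      exact Finset.card_pos.mpr ⟨0, h0m⟩
    rw [h0, one_mul, Finset.card_erase_of_mem h0m, card_supp, ← Nat.cast_add]
    apply cast2_one
    have hp := ch2 (wt d)
    have hp' := ch2 (wt d - 1)
    have ha : (wt d % 4 = 1 ∧ (wt d - 1) % 4 = 0) ∨ (wt d % 4 = 2 ∧ (wt d - 1) % 4 = 1)
        ∨ (wt d % 4 = 3 ∧ (wt d - 1) % 4 = 2) := by
      rcases hw with hw | hw <;> omega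
    rcases ha with ⟨h1, h2⟩ | ⟨h1, h2⟩ | ⟨h1, h2⟩ <;> omega

/-! ### The abstract square identity -/

theorem core [NeZero n] (A B Z : Finset (Fin n → ZMod 2))
    (hAB : ∀ x ∈ A, ∀ y ∈ B, x + y ∈ Z)
    (hgam : ∀ x ∈ A, ∀ x' ∈ A, x ≠ x' → gam (x + x') = 1)
    (a b : (Fin n → ZMod 2) → ℝ) :
    (∑ x ∈ A, a x ^ 2) * (∑ y ∈ B, b y ^ 2)
      = ∑ z ∈ Z, (∑ x ∈ A, ∑ y ∈ B,
          (if x + y = z then ((chi (ff x y) : ℤ) : ℝ) * a x * b y else 0)) ^ 2 := by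
  classical
  set e : (Fin n → ZMod 2) → (Fin n → ZMod 2) → (Fin n → ZMod 2) → ℝ :=
    fun x y z => if x + y = z then ((chi (ff x y) : ℤ) : ℝ) * a x * b y else 0 with he
  have hzz : ∀ x ∈ A, ∀ y ∈ B, ∀ x' ∈ A, ∀ y' ∈ B,
      (∑ z ∈ Z, e x y z * e x' y' z)
        = if x + y = x' + y' then
            ((chi (ff x y) * chi (ff x' y') : ℤ) : ℝ) * (a x * a x' * b y * b y') else 0 := by
    intro x hx y hy x' hx' y' hy'
    rw [Finset.sum_eq_single_of_mem (x + y) (hAB x hx y hy)]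
    · simp only [he, if_pos rfl]
      by_cases h : x + y = x' + y'
      · rw [if_pos h, if_pos h.symm]
        push_cast
        ring
      · rw [if_neg h, if_neg (fun hh => h hh.symm), mul_zero]
    · intro z _ hz
      simp only [he, if_neg (fun hh : x + y = z => hz hh.symm)]
      exact zero_mul _
  have claim1 : ∀ x ∈ A, ∀ x' ∈ A, x ≠ x' →
      (∑ y ∈ B, ∑ y' ∈ B, ∑ z ∈ Z, e x y z * e x' y' z) = 0 := by
    intro x hx x' hx' hne
    have hpt : ∀ y ∈ B, ∀ y' ∈ B,
        (∑ z ∈ Z, e x y z * e x' y' z) + (∑ z ∈ Z, e x y' z * e x' y z) = 0 := by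
      intro y hy y' hy'
      rw [hzz x hx y hy x' hx' y' hy', hzz x hx y' hy' x' hx' y hy]
      by_cases h : x + y = x' + y'
      · have h2 : x + y' = x' + y := cross h
        rw [if_pos h, if_pos h2]
        have hsign : chi (ff x y) * chi (ff x' y')
            = -(chi (ff x y') * chi (ff x' y)) := by
          have hd : x + (x + x') = x' := cancel_left x x'
          have hyd : y + (x + x') = y' := by
            calc y + (x + x') = x' + (x + y) := by ring
              _ = x' + (x' + y') := by rw [h]
              _ = y' := cancel_left x' y'
          have hp := polar x y (x + x')
          rw [show x + (x + x') = x' from hd, show y + (x + x') = y' from hyd] at hp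
          rw [hgam x hx x' hx' hne] at hp
          have hflip := chi_flip (ff x y + ff x' y') (ff x y' + ff x' y)
            (by rw [← hp]; ring)
          rw [chi_add, chi_add] at hflip
          linarith
        rw [hsign]
        push_cast
        ring
      · have h2 : ¬ (x + y' = x' + y) := fun hh => h (cross hh)
        rw [if_neg h, if_neg h2, add_zero]
    have hswap : (∑ y ∈ B, ∑ y' ∈ B, ∑ z ∈ Z, e x y z * e x' y' z)
        = (∑ y ∈ B, ∑ y' ∈ B, ∑ z ∈ Z, e x y' z * e x' y z) := Finset.sum_comm
    have hsum : (∑ y ∈ B, ∑ y' ∈ B, ∑ z ∈ Z, e x y z * e x' y' z)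
        + (∑ y ∈ B, ∑ y' ∈ B, ∑ z ∈ Z, e x y' z * e x' y z) = 0 := by
      rw [← Finset.sum_add_distrib]
      refine Finset.sum_eq_zero fun y hy => ?_
      rw [← Finset.sum_add_distrib]
      exact Finset.sum_eq_zero fun y' hy' => hpt y hy y' hy'
    linarith [hswap ▸ hsum]
  have claim2 : ∀ x ∈ A,
      (∑ y ∈ B, ∑ y' ∈ B, ∑ z ∈ Z, e x y z * e x y' z)
        = a x ^ 2 * ∑ y ∈ B, b y ^ 2 := by
    intro x hx
    rw [Finset.mul_sum]
    refine Finset.sum_congr rfl fun y hy => ?_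
    rw [Finset.sum_eq_single_of_mem y hy]
    · rw [hzz x hx y hy x hx y hy, if_pos rfl, chi_sq]
      push_cast
      ring
    · intro y' hy' hne
      rw [hzz x hx y hy x hx y' hy']
      rw [if_neg]
      intro hh
      exact hne (add_left_cancel hh).symm
  have hexp : ∑ z ∈ Z, (∑ x ∈ A, ∑ y ∈ B, e x y z) ^ 2
      = ∑ x ∈ A, ∑ x' ∈ A, ∑ y ∈ B, ∑ y' ∈ B, ∑ z ∈ Z, e x y z * e x' y' z := by
    have h1 : ∀ z, (∑ x ∈ A, ∑ y ∈ B, e x y z) ^ 2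
        = ∑ x ∈ A, ∑ x' ∈ A, ∑ y ∈ B, ∑ y' ∈ B, e x y z * e x' y' z := by
      intro z
      rw [sq, Finset.sum_mul_sum]
      refine Finset.sum_congr rfl fun x _ => ?_
      refine Finset.sum_congr rfl fun x' _ => ?_
      rw [Finset.sum_mul_sum]
    rw [Finset.sum_congr rfl fun z _ => h1 z]
    rw [Finset.sum_comm]
    refine Finset.sum_congr rfl fun x _ => ?_
    rw [Finset.sum_comm]
    refine Finset.sum_congr rfl fun x' _ => ?_
    rw [Finset.sum_comm]
    refine Finset.sum_congr rfl fun y _ => ?_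
    rw [Finset.sum_comm]
  rw [hexp]
  have hdiag : ∀ x ∈ A, (∑ x' ∈ A, ∑ y ∈ B, ∑ y' ∈ B, ∑ z ∈ Z, e x y z * e x' y' z)
      = a x ^ 2 * ∑ y ∈ B, b y ^ 2 := by
    intro x hx
    rw [Finset.sum_eq_single_of_mem x hx]
    · exact claim2 x hx
    · intro x' hx' hne
      exact claim1 x hx x' hx' (fun h => hne h.symm)
  rw [Finset.sum_congr rfl hdiag, ← Finset.sum_mul]

/-! ### Cardinalities of weight windows -/

lemma card_wt_eq (w : ℕ) :
    (univ.filter fun x : Fin n → ZMod 2 => wt x = w).card = n.choose w := by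
  classical
  have : (univ.filter fun x : Fin n → ZMod 2 => wt x = w).card
      = ((univ : Finset (Fin n)).powersetCard w).card := by
    apply Finset.card_bij (fun x _ => supp x)
    · intro x hx
      simp only [mem_filter, mem_univ, true_and] at hx
      rw [Finset.mem_powersetCard]
      exact ⟨Finset.subset_univ _, hx⟩
    · intro x hx x' hx' heq
      funext i
      have hiff : x i = 1 ↔ x' i = 1 := by
        constructor <;> intro h
        · have : i ∈ supp x := by simp [supp, h]
          rw [heq] at this
          simpa [supp] using this
        · have : i ∈ supp x' := by simp [supp, h]
          rw [← heq] at this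
          simpa [supp] using this
      rcases zmod2_cases (x i) with h1 | h1 <;> rcases zmod2_cases (x' i) with h2 | h2 <;>
        simp_all
    · intro S hS
      rw [Finset.mem_powersetCard] at hS
      refine ⟨fun i => if i ∈ S then 1 else 0, ?_, ?_⟩
      · rw [Finset.mem_filter]
        simp only [mem_filter, mem_univ, true_and, wt]
        rw [← hS.2]
        congr 1
        ext i
        by_cases h : i ∈ S <;> simp [h]
      · ext i
        by_cases h : i ∈ S <;> simp [supp, h]
  rw [this, Finset.card_powersetCard, Finset.card_univ, Fintype.card_fin]

lemma card_window (lo hi : ℕ) :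
    (univ.filter fun x : Fin n → ZMod 2 => lo ≤ wt x ∧ wt x ≤ hi).card
      = ∑ w ∈ Icc lo hi, n.choose w := by
  classical
  rw [Finset.card_eq_sum_card_fiberwise (f := wt) (t := Icc lo hi)
    (fun x hx => by simp only [coe_filter, Set.mem_setOf_eq] at hx; simp [mem_Icc, hx.2])]
  refine Finset.sum_congr rfl fun w hw => ?_
  rw [← card_wt_eq w]
  congr 1
  ext x
  simp only [mem_filter, mem_univ, true_and, mem_Icc] at *
  constructor
  · rintro ⟨_, h⟩; exact h
  · rintro h; subst h; exact ⟨⟨hw.1, hw.2⟩, rfl⟩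

lemma sum_Icc_binom {m : ℕ} (hnm : n = 2*m+1) :
    ∀ t, t ≤ m+1 → ∑ w ∈ Icc (m+1-t) (m+t), n.choose w
      = ∑ i ∈ range t, 2 * n.choose (m - i) := by
  intro t
  induction t with
  | zero =>
    intro _
    rw [Finset.Icc_eq_empty (by omega)]
    simp
  | succ t ih =>
    intro ht
    have h1 : m + 1 - (t+1) = m - t := by omega
    have h2 : m + (t+1) = (m + t) + 1 := by omega
    rw [h1, h2, Finset.sum_Icc_succ_top (by omega)]
    have h3 : Finset.Icc (m - t) (m + t) = insert (m - t) (Finset.Icc (m + 1 - t) (m + t)) := by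
      ext w
      simp only [mem_Icc, mem_insert]
      omega
    rw [h3, Finset.sum_insert (by simp only [mem_Icc]; omega)]
    rw [ih (by omega)]
    have h4 : n.choose (m + t + 1) = n.choose (m - t) := by
      have h5 : m - t = n - (m + t + 1) := by omega
      rw [h5, Nat.choose_symm (by omega)]
    rw [h4, Finset.sum_range_succ]
    ring

end SqIdAux

/-- Theorem 2.3 (ii): if `n ≡ 3 (mod 4)`, `m = (n−1)/2` and `1 ≤ k ≤ m`, there is
a square identity of size `[2n+2, Σ_{i=0}^{k−1} 2·C(n,m−i), Σ_{i=0}^{k} 2·C(n,m−i)]`. -/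
theorem square_identity_binomial_mod4 (n m k : ℕ) (hn : 0 < n) (hn4 : n % 4 = 3)
    (hm : m = (n - 1) / 2) (hk : 1 ≤ k) (hkm : k ≤ m) :
    IsSquareIdentity (2 * n + 2)
      (∑ i ∈ Finset.range k, 2 * n.choose (m - i))
      (∑ i ∈ Finset.range (k + 1), 2 * n.choose (m - i)) := by
  classical
  open Finset SqIdAux in
  haveI : NeZero n := ⟨by omega⟩
  have hn2m : n = 2*m+1 := by omega
  have hn3 : 3 ≤ n := by omega
  have hm1 : 1 ≤ m := le_trans hk hkm
  set A := (Finset.univ.filter fun x : Fin n → ZMod 2 =>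
    (0 ≤ SqIdAux.wt x ∧ SqIdAux.wt x ≤ 1) ∨ (n-1 ≤ SqIdAux.wt x ∧ SqIdAux.wt x ≤ n)) with hAdef
  set B := (Finset.univ.filter fun y : Fin n → ZMod 2 =>
    m+1-k ≤ SqIdAux.wt y ∧ SqIdAux.wt y ≤ m+k) with hBdef
  set Z := (Finset.univ.filter fun z : Fin n → ZMod 2 =>
    m+1-(k+1) ≤ SqIdAux.wt z ∧ SqIdAux.wt z ≤ m+(k+1)) with hZdef
  have hAcard : A.card = 2*n+2 := by
    rw [hAdef, Finset.filter_or,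
      Finset.card_union_of_disjoint (by
        rw [Finset.disjoint_left]
        intro x hx hx'
        simp only [Finset.mem_filter] at hx hx'
        omega),
      SqIdAux.card_window, SqIdAux.card_window]
    have e1 : Finset.Icc (0:ℕ) 1 = {0, 1} := by
      ext w; simp [Finset.mem_Icc]; omega
    have e2 : Finset.Icc (n-1) n = {n-1, n} := by
      ext w; simp [Finset.mem_Icc]; omega
    rw [e1, e2, Finset.sum_pair (by omega : (0:ℕ) ≠ 1),
      Finset.sum_pair (by omega : n - 1 ≠ n)]
    have e3 : n.choose (n-1) = n := by
      have : n - 1 = n - 1 := rfl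
      rw [show n - 1 = n - 1 from rfl, Nat.choose_symm (by omega), Nat.choose_one_right]
    rw [Nat.choose_zero_right, Nat.choose_one_right, e3, Nat.choose_self]
    omega
  have hBcard : B.card = ∑ i ∈ Finset.range k, 2 * n.choose (m - i) := by
    rw [hBdef, SqIdAux.card_window, SqIdAux.sum_Icc_binom hn2m k (by omega)]
  have hZcard : Z.card = ∑ i ∈ Finset.range (k+1), 2 * n.choose (m - i) := by
    rw [hZdef, SqIdAux.card_window, SqIdAux.sum_Icc_binom hn2m (k+1) (by omega)]
  have hAB : ∀ x ∈ A, ∀ y ∈ B, x + y ∈ Z := by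
    intro x hx y hy
    simp only [hAdef, hBdef, hZdef, Finset.mem_filter, Finset.mem_univ, true_and] at hx hy ⊢
    have t1 := SqIdAux.wt_add_le x y
    have t2 : SqIdAux.wt y ≤ SqIdAux.wt (x + y) + SqIdAux.wt x := by
      have := SqIdAux.wt_le_of_le y x
      rwa [add_comm y x] at this
    have t3 := SqIdAux.wt_le_of_le x y
    have t4 := SqIdAux.wt_add_le_compl x y
    have t5 := SqIdAux.wt_le_n x
    have t6 := SqIdAux.wt_le_n y
    rcases hx with ⟨h5, h6⟩ | ⟨h5, h6⟩ <;> constructor <;> omega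
  have hgam : ∀ x ∈ A, ∀ x' ∈ A, x ≠ x' → SqIdAux.gam (x + x') = 1 := by
    intro x hx x' hx' hne
    apply SqIdAux.gam_one hn4
    simp only [hAdef, Finset.mem_filter, Finset.mem_univ, true_and] at hx hx'
    have hd1 : 1 ≤ SqIdAux.wt (x + x') := by
      rcases Nat.eq_zero_or_pos (SqIdAux.wt (x + x')) with h0 | h0
      · exfalso
        have hz : x + x' = 0 := (SqIdAux.wt_eq_zero_iff _).mp h0
        apply hne
        have hc := SqIdAux.cancel_left x x'
        rw [hz, add_zero] at hc
        exact hc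
      · exact h0
    have t1 := SqIdAux.wt_add_le x x'
    have t2 : SqIdAux.wt x' ≤ SqIdAux.wt (x + x') + SqIdAux.wt x := by
      have := SqIdAux.wt_le_of_le x' x
      rwa [add_comm x' x] at this
    have t3 := SqIdAux.wt_le_of_le x x'
    have t4 := SqIdAux.wt_add_le_compl x x'
    have t5 := SqIdAux.wt_le_n x
    have t6 := SqIdAux.wt_le_n x'
    rcases hx with ⟨h5, h6⟩ | ⟨h5, h6⟩ <;> rcases hx' with ⟨h7, h8⟩ | ⟨h7, h8⟩ <;> omega
  -- index equivalences
  let eA : Fin (2*n+2) ≃ ↥A := (finCongr hAcard.symm).trans A.equivFin.symm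
  let eB : Fin (∑ i ∈ Finset.range k, 2 * n.choose (m - i)) ≃ ↥B :=
    (finCongr hBcard.symm).trans B.equivFin.symm
  let eZ : Fin (∑ i ∈ Finset.range (k+1), 2 * n.choose (m - i)) ≃ ↥Z :=
    (finCongr hZcard.symm).trans Z.equivFin.symm
  refine ⟨fun mm i j =>
    if ((eA i : Fin n → ZMod 2) + (eB j : Fin n → ZMod 2)) = (eZ mm : Fin n → ZMod 2)
    then SqIdAux.chi (SqIdAux.ff (eA i : Fin n → ZMod 2) (eB j : Fin n → ZMod 2)) else 0, ?_⟩
  intro a b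
  set a' : (Fin n → ZMod 2) → ℝ := fun v => if h : v ∈ A then a (eA.symm ⟨v, h⟩) else 0 with ha'
  set b' : (Fin n → ZMod 2) → ℝ := fun v => if h : v ∈ B then b (eB.symm ⟨v, h⟩) else 0 with hb'
  have haA : ∀ i, a' ((eA i : Fin n → ZMod 2)) = a i := by
    intro i
    simp only [ha']
    rw [dif_pos (eA i).2]
    congr 1
    rw [Subtype.coe_eta, Equiv.symm_apply_apply]
  have hbB : ∀ j, b' ((eB j : Fin n → ZMod 2)) = b j := by
    intro j
    simp only [hb']
    rw [dif_pos (eB j).2]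
    congr 1
    rw [Subtype.coe_eta, Equiv.symm_apply_apply]
  have hsA : ∀ g : (Fin n → ZMod 2) → ℝ, ∑ x ∈ A, g x = ∑ i, g (eA i : Fin n → ZMod 2) := by
    intro g
    rw [← Finset.sum_coe_sort A g]
    exact (Equiv.sum_comp eA fun t => g ↑t).symm
  have hsB : ∀ g : (Fin n → ZMod 2) → ℝ, ∑ y ∈ B, g y = ∑ j, g (eB j : Fin n → ZMod 2) := by
    intro g
    rw [← Finset.sum_coe_sort B g]
    exact (Equiv.sum_comp eB fun t => g ↑t).symm
  have hsZ : ∀ g : (Fin n → ZMod 2) → ℝ, ∑ z ∈ Z, g z = ∑ mm, g (eZ mm : Fin n → ZMod 2) := by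
    intro g
    rw [← Finset.sum_coe_sort Z g]
    exact (Equiv.sum_comp eZ fun t => g ↑t).symm
  have hmain := SqIdAux.core A B Z hAB hgam a' b'
  have hL1 : ∑ x ∈ A, a' x ^ 2 = ∑ i, a i ^ 2 := by
    rw [hsA (fun x => a' x ^ 2)]
    exact Finset.sum_congr rfl fun i _ => by rw [haA]
  have hL2 : ∑ y ∈ B, b' y ^ 2 = ∑ j, b j ^ 2 := by
    rw [hsB (fun y => b' y ^ 2)]
    exact Finset.sum_congr rfl fun j _ => by rw [hbB]
  rw [← hL1, ← hL2, hmain]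
  rw [hsZ (fun z => (∑ x ∈ A, ∑ y ∈ B,
    (if x + y = z then ((SqIdAux.chi (SqIdAux.ff x y) : ℤ) : ℝ) * a' x * b' y else 0)) ^ 2)]
  refine Finset.sum_congr rfl fun mm _ => ?_
  congr 1
  rw [hsA]
  refine Finset.sum_congr rfl fun i _ => ?_
  rw [hsB]
  refine Finset.sum_congr rfl fun j _ => ?_
  by_cases h : (eA i : Fin n → ZMod 2) + (eB j : Fin n → ZMod 2) = (eZ mm : Fin n → ZMod 2)
  · simp only [if_pos h, haA, hbB]
  · simp only [if_neg h, Int.cast_zero, zero_mul]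
end

section
/- Let f : (ℤ/2ℤ)^n × (ℤ/2ℤ)^n → ℤ/2ℤ and let A, B ⊆ (ℤ/2ℤ)^n be finite subsets. Then (A, B) is a multiplicative pair with respect to f if and only if for all x, z ∈ A with x ≠ z and all y, t ∈ B with y ≠ t such that x + y + z + t = 0, one has f(x,y) + f(z,t) + f(x,t) + f(z,y) = 1 in ℤ/2ℤ. -/
/-- The real sign `(−1)^ε` of an element `ε ∈ ℤ/2ℤ`. -/
def sgn (ε : ZMod 2) : ℝ := if ε = 0 then 1 else -1

/-- `(A, B)` is a multiplicative pair with respect to the twisting function `f`. -/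
def IsMultiplicativePair (n : ℕ)
    (f : (Fin n → ZMod 2) → (Fin n → ZMod 2) → ZMod 2)
    (A B : Finset (Fin n → ZMod 2)) : Prop :=
  ∀ (a b : (Fin n → ZMod 2) → ℝ),
    (∑ x ∈ A, a x ^ 2) * (∑ y ∈ B, b y ^ 2) =
      ∑ z : Fin n → ZMod 2,
        (∑ x ∈ A, ∑ y ∈ B, if x + y = z then sgn (f x y) * a x * b y else 0) ^ 2

private lemma zmod2_cases (α : ZMod 2) : α = 0 ∨ α = 1 := by revert α; decide

private lemma sgn_mul_self (α : ZMod 2) : sgn α * sgn α = 1 := by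
  rcases zmod2_cases α with rfl | rfl <;> norm_num [sgn]

private lemma sgn_key (α β γ δ : ZMod 2)
    (h : sgn α * sgn β + sgn γ * sgn δ = 0) : α + β + γ + δ = 1 := by
  rcases zmod2_cases α with rfl | rfl <;> rcases zmod2_cases β with rfl | rfl <;>
    rcases zmod2_cases γ with rfl | rfl <;> rcases zmod2_cases δ with rfl | rfl <;>
    first | decide | (norm_num [sgn] at h)

private lemma sgn_pair (α β γ δ : ZMod 2) (h : α + β + γ + δ = 1) :
    sgn α * sgn β + sgn γ * sgn δ = 0 := by
  rcases zmod2_cases α with rfl | rfl <;> rcases zmod2_cases β with rfl | rfl <;>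
    rcases zmod2_cases γ with rfl | rfl <;> rcases zmod2_cases δ with rfl | rfl <;>
    first | (exact absurd h (by decide)) | norm_num [sgn]

private lemma cond_symm {n : ℕ} (x y x' y' : Fin n → ZMod 2) :
    x + y = x' + y' ↔ x + y' = x' + y := by
  have key : ∀ a b c d : ZMod 2, (a + b = c + d) ↔ (a + d = c + b) := by decide
  constructor <;> intro h <;> funext i <;>
    simpa [Pi.add_apply, (key (x i) (y i) (x' i) (y' i))] using congrFun h i

private lemma sum4_eq_zero {n : ℕ} {x y x' y' : Fin n → ZMod 2} (h : x + y = x' + y') :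
    x + y + x' + y' = 0 := by
  have key : ∀ a b c d : ZMod 2, a + b = c + d → a + b + c + d = 0 := by decide
  funext i
  simpa [Pi.add_apply] using key _ _ _ _ (congrFun h i)

private lemma eq_of_sum4_zero {n : ℕ} {x y x' y' : Fin n → ZMod 2}
    (h : x + y + x' + y' = 0) : x + y = x' + y' := by
  have key : ∀ a b c d : ZMod 2, a + b + c + d = 0 → a + b = c + d := by decide
  funext i
  have := congrFun h i
  simp only [Pi.add_apply, Pi.zero_apply] at this
  simpa [Pi.add_apply] using key _ _ _ _ this

private lemma sum_ind {α : Type*} [DecidableEq α] (s : Finset α) (x z : α) (h : α → ℝ) :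
    ∑ u ∈ s, ((if u = x then (1:ℝ) else 0) + (if u = z then 1 else 0)) * h u
      = (if x ∈ s then h x else 0) + (if z ∈ s then h z else 0) := by
  simp [add_mul, ite_mul, Finset.sum_add_distrib, Finset.sum_ite_eq']

private lemma sum_ite_ite {G : Type*} [Fintype G] [DecidableEq G] (u v : G) (cu cv : ℝ) :
    ∑ z : G, (if u = z then cu else 0) * (if v = z then cv else 0)
      = if u = v then cu * cv else 0 := by
  have : ∀ z : G, (if u = z then cu else 0) * (if v = z then cv else 0)
      = if u = z then (if u = v then cu * cv else 0) else 0 := by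
    intro z; by_cases h1 : u = z <;> by_cases h2 : v = z <;> subst_vars <;> simp_all [eq_comm]
  rw [Finset.sum_congr rfl fun z _ => this z, Finset.sum_ite_eq]
  simp

private lemma step1 {G : Type*} [Fintype G] [DecidableEq G] [AddCommGroup G]
    (A B : Finset G) (c : G → G → ℝ) :
    ∑ z : G, (∑ x ∈ A, ∑ y ∈ B, if x + y = z then c x y else 0) ^ 2
      = ∑ x ∈ A, ∑ y ∈ B, ∑ x' ∈ A, ∑ y' ∈ B,
          if x + y = x' + y' then c x y * c x' y' else 0 := by
  have h1 : ∀ z : G, (∑ x ∈ A, ∑ y ∈ B, if x + y = z then c x y else 0)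
      = ∑ p ∈ A ×ˢ B, if p.1 + p.2 = z then c p.1 p.2 else 0 := by
    intro z; rw [Finset.sum_product]
  calc ∑ z : G, (∑ x ∈ A, ∑ y ∈ B, if x + y = z then c x y else 0) ^ 2
      = ∑ z : G, ∑ p ∈ A ×ˢ B, ∑ q ∈ A ×ˢ B,
          (if p.1 + p.2 = z then c p.1 p.2 else 0) * (if q.1 + q.2 = z then c q.1 q.2 else 0) := by
        refine Finset.sum_congr rfl fun z _ => ?_
        rw [h1 z, pow_two, Finset.sum_mul_sum]
    _ = ∑ p ∈ A ×ˢ B, ∑ q ∈ A ×ˢ B, ∑ z : G,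
          (if p.1 + p.2 = z then c p.1 p.2 else 0) * (if q.1 + q.2 = z then c q.1 q.2 else 0) := by
        rw [Finset.sum_comm]
        exact Finset.sum_congr rfl fun p _ => Finset.sum_comm
    _ = ∑ p ∈ A ×ˢ B, ∑ q ∈ A ×ˢ B, if p.1 + p.2 = q.1 + q.2 then c p.1 p.2 * c q.1 q.2 else 0 :=
        Finset.sum_congr rfl fun p _ => Finset.sum_congr rfl fun q _ => sum_ite_ite _ _ _ _
    _ = ∑ x ∈ A, ∑ y ∈ B, ∑ x' ∈ A, ∑ y' ∈ B,
          if x + y = x' + y' then c x y * c x' y' else 0 := by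
        rw [Finset.sum_product]
        refine Finset.sum_congr rfl fun x _ => Finset.sum_congr rfl fun y _ => ?_
        rw [Finset.sum_product]

/-- The cross-term part of the expanded right-hand side. -/
private def Scross (n : ℕ) (f : (Fin n → ZMod 2) → (Fin n → ZMod 2) → ZMod 2)
    (A B : Finset (Fin n → ZMod 2)) (a b : (Fin n → ZMod 2) → ℝ) : ℝ :=
  ∑ x ∈ A, ∑ y ∈ B, ∑ x' ∈ A.erase x, ∑ y' ∈ B,
    if x + y = x' + y' then
      (sgn (f x y) * a x * b y) * (sgn (f x' y') * a x' * b y') else 0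

private lemma expand (n : ℕ) (f : (Fin n → ZMod 2) → (Fin n → ZMod 2) → ZMod 2)
    (A B : Finset (Fin n → ZMod 2)) (a b : (Fin n → ZMod 2) → ℝ) :
    ∑ z : Fin n → ZMod 2,
        (∑ x ∈ A, ∑ y ∈ B, if x + y = z then sgn (f x y) * a x * b y else 0) ^ 2
      = (∑ x ∈ A, ∑ y ∈ B, a x ^ 2 * b y ^ 2) + Scross n f A B a b := by
  rw [step1 A B (fun x y => sgn (f x y) * a x * b y), Scross, ← Finset.sum_add_distrib]
  refine Finset.sum_congr rfl fun x hx => ?_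
  rw [← Finset.sum_add_distrib]
  refine Finset.sum_congr rfl fun y hy => ?_
  -- split off the x' = x term
  rw [← Finset.sum_erase_add A _ hx, add_comm]
  congr 1
  · -- the x' = x term equals the diagonal term
    have h2 : ∀ y' ∈ B, (if x + y = x + y' then
          (sgn (f x y) * a x * b y) * (sgn (f x y') * a x * b y') else 0)
        = if y' = y then (sgn (f x y) * a x * b y) * (sgn (f x y') * a x * b y') else 0 := by
      intro y' _
      congr 1
      simp only [add_right_inj, eq_comm]
    rw [Finset.sum_congr rfl h2, Finset.sum_ite_eq' B y, if_pos hy]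
    linear_combination (a x ^ 2 * b y ^ 2) * sgn_mul_self (f x y)

private lemma iff1 (n : ℕ) (f : (Fin n → ZMod 2) → (Fin n → ZMod 2) → ZMod 2)
    (A B : Finset (Fin n → ZMod 2)) :
    IsMultiplicativePair n f A B ↔ ∀ a b, Scross n f A B a b = 0 := by
  unfold IsMultiplicativePair
  constructor
  · intro h a b
    have h0 := h a b
    rw [expand, Finset.sum_mul_sum] at h0
    linarith
  · intro h a b
    rw [expand, h a b, Finset.sum_mul_sum, add_zero]

private lemma scross_fact (n : ℕ) (f : (Fin n → ZMod 2) → (Fin n → ZMod 2) → ZMod 2)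
    (A B : Finset (Fin n → ZMod 2)) (a b : (Fin n → ZMod 2) → ℝ) :
    Scross n f A B a b
      = ∑ x ∈ A, a x * ∑ y ∈ B, b y * ∑ x' ∈ A.erase x, a x' * ∑ y' ∈ B, b y' *
          (if x + y = x' + y' then sgn (f x y) * sgn (f x' y') else 0) := by
  unfold Scross
  simp only [Finset.mul_sum]
  refine Finset.sum_congr rfl fun x _ => Finset.sum_congr rfl fun y _ =>
    Finset.sum_congr rfl fun x' _ => Finset.sum_congr rfl fun y' _ => ?_
  split_ifs <;> ring

private lemma pair_zero {β : Type*} (B : Finset β) (g : β → β → ℝ)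
    (h : ∀ y ∈ B, ∀ y' ∈ B, g y y' + g y' y = 0) :
    ∑ y ∈ B, ∑ y' ∈ B, g y y' = 0 := by
  have hswap : (∑ y ∈ B, ∑ y' ∈ B, g y y') = ∑ y ∈ B, ∑ y' ∈ B, g y' y := Finset.sum_comm
  have h2 : (∑ y ∈ B, ∑ y' ∈ B, g y y') + (∑ y ∈ B, ∑ y' ∈ B, g y' y) = 0 := by
    rw [← Finset.sum_add_distrib]
    refine Finset.sum_eq_zero fun y hy => ?_
    rw [← Finset.sum_add_distrib]
    exact Finset.sum_eq_zero fun y' hy' => h y hy y' hy'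
  rw [← hswap] at h2; linarith

/-- Proposition 3.4: `(A, B)` is a multiplicative pair if and only if for all
`x ≠ z` in `A` and `y ≠ t` in `B` with `x + y + z + t = 0`, one has
`f(x,y) + f(z,t) + f(x,t) + f(z,y) = 1`. -/
theorem multiplicative_pair_iff (n : ℕ)
    (f : (Fin n → ZMod 2) → (Fin n → ZMod 2) → ZMod 2)
    (A B : Finset (Fin n → ZMod 2)) :
    IsMultiplicativePair n f A B ↔
      ∀ x ∈ A, ∀ z ∈ A, ∀ y ∈ B, ∀ t ∈ B,
        x ≠ z → y ≠ t → x + y + z + t = 0 →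
          f x y + f z t + f x t + f z y = 1 := by
  rw [iff1]
  constructor
  · -- forward
    intro hS x hx z hz y hy t ht hxz hyt hsum0
    have h0 := hS (fun u => (if u = x then (1:ℝ) else 0) + (if u = z then 1 else 0))
                  (fun v => (if v = y then (1:ℝ) else 0) + (if v = t then 1 else 0))
    rw [scross_fact] at h0
    have heq1 : x + y = z + t := eq_of_sum4_zero hsum0
    have heq2 : x + t = z + y := (cond_symm x y z t).mp heq1
    have hne1 : ¬ (x + y = z + y) := fun h => hxz (add_right_cancel h)
    have hne2 : ¬ (x + t = z + t) := fun h => hxz (add_right_cancel h)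
    have hne3 : ¬ (z + y = x + y) := fun h => hxz (add_right_cancel h).symm
    have hne4 : ¬ (z + t = x + t) := fun h => hxz (add_right_cancel h).symm
    have hzx : z ≠ x := Ne.symm hxz
    have heq3 : z + y = x + t := heq2.symm
    have heq4 : z + t = x + y := heq1.symm
    simp only [sum_ind, hx, hz, hy, ht, if_true, Finset.mem_erase, ne_eq, hxz, hzx,
      not_true_eq_false, not_false_eq_true, false_and, and_true, true_and, if_false,
      eq_true heq1, eq_true heq2, eq_true heq3, eq_true heq4,
      eq_false hne1, eq_false hne2, eq_false hne3, eq_false hne4, if_true,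
      add_zero, zero_add, mul_zero, zero_mul, mul_one, one_mul] at h0
    refine sgn_key _ _ _ _ ?_
    linear_combination h0 / 2
  · -- backward
    intro H a b
    unfold Scross
    refine Eq.trans (Finset.sum_congr rfl fun x _ => Finset.sum_comm) ?_
    refine Finset.sum_eq_zero fun x hx => Finset.sum_eq_zero fun x' hx' => ?_
    refine pair_zero B (fun y y' => if x + y = x' + y' then
      (sgn (f x y) * a x * b y) * (sgn (f x' y') * a x' * b y') else 0) fun y hy y' hy' => ?_
    obtain ⟨hxx', hx'A⟩ := Finset.mem_erase.mp hx'
    beta_reduce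
    by_cases hc : x + y = x' + y'
    · have hc2 : x + y' = x' + y := (cond_symm x y x' y').mp hc
      have hyy' : y ≠ y' := by rintro rfl; exact hxx' (add_right_cancel hc).symm
      have h1 := H x hx x' hx'A y hy y' hy' (Ne.symm hxx') hyy' (sum4_eq_zero hc)
      have h2 := sgn_pair _ _ _ _ h1
      rw [if_pos hc, if_pos hc2]
      linear_combination (a x * b y * a x' * b y') * h2
    · have hc2 : ¬ (x + y' = x' + y) := fun h => hc ((cond_symm x y x' y').mpr h)
      rw [if_neg hc, if_neg hc2]
      norm_num
end

section
/- Let f_O : (ℤ/2ℤ)^n × (ℤ/2ℤ)^n → ℤ/2ℤ be the octonion-type twisting function and define α_O(x) = f_O(x,x). Then for all x, y ∈ (ℤ/2ℤ)^n one has f_O(x,y) + f_O(y,x) = α_O(x+y) + α_O(x) + α_O(y) in ℤ/2ℤ. -/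
/-- The octonion-type twisting function on `(ℤ/2ℤ)^n`:
`f_O(x,y) = Σ_{i<j<k} (x_i x_j y_k + x_i y_j x_k + y_i x_j x_k) + Σ_{i≤j} x_i y_j`. -/
def fO (n : ℕ) (x y : Fin n → ZMod 2) : ZMod 2 :=
  (∑ k : Fin n, ∑ j ∈ Finset.Iio k, ∑ i ∈ Finset.Iio j,
      (x i * x j * y k + x i * y j * x k + y i * x j * x k)) +
  ∑ j : Fin n, ∑ i ∈ Finset.Iic j, x i * y j

/-- The generating function `α_O(x) = f_O(x,x)`. -/
def alphaO (n : ℕ) (x : Fin n → ZMod 2) : ZMod 2 := fO n x x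

lemma key3 : ∀ a b c d e f : ZMod 2,
    (a * b * f + a * e * c + d * b * c) + (d * e * c + d * b * f + a * e * f) =
    ((a + d) * (b + e) * (c + f) + (a + d) * (b + e) * (c + f) +
      (a + d) * (b + e) * (c + f)) + (a * b * c + a * b * c + a * b * c) +
      (d * e * f + d * e * f + d * e * f) := by decide

lemma key2 : ∀ a b d e : ZMod 2,
    a * e + d * b = (a + d) * (b + e) + a * b + d * e := by decide

/-- Proposition 4.4 (i), condition (i) of a generating function:
`f_O(x,y) + f_O(y,x) = α_O(x+y) + α_O(x) + α_O(y)`. -/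
theorem fO_symm_generating (n : ℕ) (x y : Fin n → ZMod 2) :
    fO n x y + fO n y x = alphaO n (x + y) + alphaO n x + alphaO n y := by
  simp only [fO, alphaO, Pi.add_apply]
  have hT :
      (∑ k : Fin n, ∑ j ∈ Finset.Iio k, ∑ i ∈ Finset.Iio j,
          (x i * x j * y k + x i * y j * x k + y i * x j * x k)) +
      (∑ k : Fin n, ∑ j ∈ Finset.Iio k, ∑ i ∈ Finset.Iio j,
          (y i * y j * x k + y i * x j * y k + x i * y j * y k)) =
      (∑ k : Fin n, ∑ j ∈ Finset.Iio k, ∑ i ∈ Finset.Iio j,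
          ((x i + y i) * (x j + y j) * (x k + y k) +
            (x i + y i) * (x j + y j) * (x k + y k) +
            (x i + y i) * (x j + y j) * (x k + y k))) +
      (∑ k : Fin n, ∑ j ∈ Finset.Iio k, ∑ i ∈ Finset.Iio j,
          (x i * x j * x k + x i * x j * x k + x i * x j * x k)) +
      (∑ k : Fin n, ∑ j ∈ Finset.Iio k, ∑ i ∈ Finset.Iio j,
          (y i * y j * y k + y i * y j * y k + y i * y j * y k)) := by
    simp only [← Finset.sum_add_distrib]
    refine Finset.sum_congr rfl fun k _ => ?_
    refine Finset.sum_congr rfl fun j _ => ?_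
    refine Finset.sum_congr rfl fun i _ => ?_
    have := key3 (x i) (x j) (x k) (y i) (y j) (y k)
    linear_combination this
  have hP :
      (∑ j : Fin n, ∑ i ∈ Finset.Iic j, x i * y j) +
      (∑ j : Fin n, ∑ i ∈ Finset.Iic j, y i * x j) =
      (∑ j : Fin n, ∑ i ∈ Finset.Iic j, (x i + y i) * (x j + y j)) +
      (∑ j : Fin n, ∑ i ∈ Finset.Iic j, x i * x j) +
      (∑ j : Fin n, ∑ i ∈ Finset.Iic j, y i * y j) := by
    simp only [← Finset.sum_add_distrib]
    refine Finset.sum_congr rfl fun j _ => ?_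
    refine Finset.sum_congr rfl fun i _ => ?_
    have := key2 (x i) (x j) (y i) (y j)
    linear_combination this
  linear_combination hT + hP
end

section
/- Let f_O : (ℤ/2ℤ)^n × (ℤ/2ℤ)^n → ℤ/2ℤ be the octonion-type twisting function and α_O(x) = f_O(x,x). Then for all x, y, z, t ∈ (ℤ/2ℤ)^n with x + y + z + t = 0, one has f_O(x,y) + f_O(z,t) + f_O(x,t) + f_O(z,y) = α_O(x+z) in ℤ/2ℤ. -/
/-- Proposition 4.4 (ii): if `x + y + z + t = 0`, then
`f_O(x,y) + f_O(z,t) + f_O(x,t) + f_O(z,y) = α_O(x+z)`. -/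
theorem fO_quadruple (n : ℕ) (x y z t : Fin n → ZMod 2)
    (h : x + y + z + t = 0) :
    fO n x y + fO n z t + fO n x t + fO n z y = alphaO n (x + z) := by
  have ht : ∀ i, t i = x i + y i + z i := by
    intro i
    have h' := congrFun h i
    simp only [Pi.add_apply, Pi.zero_apply] at h'
    have key : ∀ a b c d : ZMod 2, a + b + c + d = 0 → d = a + b + c := by decide
    exact key _ _ _ _ h'
  unfold alphaO fO
  have hT :
      (∑ k : Fin n, ∑ j ∈ Finset.Iio k, ∑ i ∈ Finset.Iio j,
        (x i * x j * y k + x i * y j * x k + y i * x j * x k)) +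
      (∑ k : Fin n, ∑ j ∈ Finset.Iio k, ∑ i ∈ Finset.Iio j,
        (z i * z j * t k + z i * t j * z k + t i * z j * z k)) +
      (∑ k : Fin n, ∑ j ∈ Finset.Iio k, ∑ i ∈ Finset.Iio j,
        (x i * x j * t k + x i * t j * x k + t i * x j * x k)) +
      (∑ k : Fin n, ∑ j ∈ Finset.Iio k, ∑ i ∈ Finset.Iio j,
        (z i * z j * y k + z i * y j * z k + y i * z j * z k)) =
      (∑ k : Fin n, ∑ j ∈ Finset.Iio k, ∑ i ∈ Finset.Iio j,
        ((x + z) i * (x + z) j * (x + z) k + (x + z) i * (x + z) j * (x + z) k +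
          (x + z) i * (x + z) j * (x + z) k)) := by
    rw [← Finset.sum_add_distrib, ← Finset.sum_add_distrib, ← Finset.sum_add_distrib]
    refine Finset.sum_congr rfl fun k _ => ?_
    rw [← Finset.sum_add_distrib, ← Finset.sum_add_distrib, ← Finset.sum_add_distrib]
    refine Finset.sum_congr rfl fun j _ => ?_
    rw [← Finset.sum_add_distrib, ← Finset.sum_add_distrib, ← Finset.sum_add_distrib]
    refine Finset.sum_congr rfl fun i _ => ?_
    simp only [ht, Pi.add_apply]
    generalize x i = xi; generalize x j = xj; generalize x k = xk
    generalize y i = yi; generalize y j = yj; generalize y k = yk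
    generalize z i = zi; generalize z j = zj; generalize z k = zk
    revert xi xj xk yi yj yk zi zj zk
    decide
  have hP :
      (∑ j : Fin n, ∑ i ∈ Finset.Iic j, x i * y j) +
      (∑ j : Fin n, ∑ i ∈ Finset.Iic j, z i * t j) +
      (∑ j : Fin n, ∑ i ∈ Finset.Iic j, x i * t j) +
      (∑ j : Fin n, ∑ i ∈ Finset.Iic j, z i * y j) =
      (∑ j : Fin n, ∑ i ∈ Finset.Iic j, (x + z) i * (x + z) j) := by
    rw [← Finset.sum_add_distrib, ← Finset.sum_add_distrib, ← Finset.sum_add_distrib]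
    refine Finset.sum_congr rfl fun j _ => ?_
    rw [← Finset.sum_add_distrib, ← Finset.sum_add_distrib, ← Finset.sum_add_distrib]
    refine Finset.sum_congr rfl fun i _ => ?_
    simp only [ht, Pi.add_apply]
    generalize x i = xi; generalize x j = xj
    generalize y i = yi; generalize y j = yj
    generalize z i = zi; generalize z j = zj
    revert xi xj yi yj zi zj
    decide
  linear_combination hT + hP
end

section
/- Let f_O : (ℤ/2ℤ)^n × (ℤ/2ℤ)^n → ℤ/2ℤ be the octonion-type twisting function and α_O(x) = f_O(x,x). Then for every x ∈ (ℤ/2ℤ)^n: α_O(x) = 0 if |x| ≡ 0 (mod 4), and α_O(x) = 1 otherwise. -/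
open Finset


/-- The weight of `x ∈ (ℤ/2ℤ)^n`: the number of indices `i` with `x_i = 1`. -/
def weight (n : ℕ) (x : Fin n → ZMod 2) : ℕ :=
  (Finset.univ.filter fun i => x i = 1).card

private lemma key (w : ℕ) :
    (w.choose 2 % 2 = 1 ↔ (w % 4 = 2 ∨ w % 4 = 3)) ∧ (w.choose 3 % 2 = 1 ↔ w % 4 = 3) := by
  induction w with
  | zero => simp
  | succ w ih =>
    have e2 : (w+1).choose 2 = w.choose 1 + w.choose 2 := Nat.choose_succ_succ w 1
    have e3 : (w+1).choose 3 = w.choose 2 + w.choose 3 := Nat.choose_succ_succ w 2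
    rw [e2, e3, Nat.choose_one_right]
    omega

private lemma main_ind (n : ℕ) (g : ℕ → ZMod 2) :
    (∑ i ∈ range n, g i) = ((∑ i ∈ range n, if g i = 1 then 1 else 0 : ℕ) : ZMod 2) ∧
    (∑ j ∈ range n, ∑ i ∈ range j, g i * g j)
      = ((Nat.choose (∑ i ∈ range n, if g i = 1 then 1 else 0) 2 : ℕ) : ZMod 2) ∧
    (∑ k ∈ range n, ∑ j ∈ range k, ∑ i ∈ range j, g i * g j * g k)
      = ((Nat.choose (∑ i ∈ range n, if g i = 1 then 1 else 0) 3 : ℕ) : ZMod 2) := by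
  induction n with
  | zero => simp
  | succ n ih =>
    obtain ⟨h1, h2, h3⟩ := ih
    set W : ℕ := ∑ i ∈ range n, if g i = 1 then 1 else 0 with hW
    have hcases : g n = 0 ∨ g n = 1 := by
      have : ∀ a : ZMod 2, a = 0 ∨ a = 1 := by decide
      exact this (g n)
    have hP3split : (∑ k ∈ range (n+1), ∑ j ∈ range k, ∑ i ∈ range j, g i * g j * g k)
        = (∑ k ∈ range n, ∑ j ∈ range k, ∑ i ∈ range j, g i * g j * g k)
          + (∑ j ∈ range n, ∑ i ∈ range j, g i * g j) * g n := by
      rw [sum_range_succ]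
      congr 1
      rw [sum_mul]
      exact sum_congr rfl fun j _ => (sum_mul ..).symm
    rw [hP3split]
    simp only [← sum_mul] at h2 h3
    simp only [sum_range_succ, ← sum_mul, ← hW]
    rcases hcases with h | h
    · simp [h, h1, h2, h3]
    · have e2 : (W+1).choose 2 = W.choose 1 + W.choose 2 := Nat.choose_succ_succ W 1
      have e3 : (W+1).choose 3 = W.choose 2 + W.choose 3 := Nat.choose_succ_succ W 2
      simp only [h, if_pos rfl, mul_one, h1, h2, h3, ← sum_mul]
      refine ⟨by push_cast; ring, ?_, ?_⟩
      · simp only [if_true]; rw [e2, Nat.choose_one_right]; push_cast; ring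
      · simp only [if_true]; rw [e3]; push_cast; ring

private lemma sum_Iio_conv {M : Type*} [AddCommMonoid M] {n : ℕ} (b : Fin n)
    (f : Fin n → M) (g : ℕ → M) (h : ∀ i : Fin n, g ↑i = f i) :
    ∑ i ∈ Finset.Iio b, f i = ∑ i ∈ range (b : ℕ), g i := by
  rw [← Nat.Iio_eq_range, ← Fin.map_valEmbedding_Iio, Finset.sum_map]
  simp [h]

private lemma sum_univ_conv {M : Type*} [AddCommMonoid M] {n : ℕ}
    (f : Fin n → M) (g : ℕ → M) (h : ∀ i : Fin n, g ↑i = f i) :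
    ∑ i, f i = ∑ i ∈ range n, g i := by
  rw [← Fin.sum_univ_eq_sum_range g n]
  exact Finset.sum_congr rfl fun i _ => (h i).symm


/-- The explicit form of `α_O`: it vanishes exactly on elements whose weight
is a multiple of 4. -/
theorem alphaO_eq (n : ℕ) (x : Fin n → ZMod 2) :
    alphaO n x = if weight n x % 4 = 0 then 0 else 1 := by
  classical
  set g : ℕ → ZMod 2 := fun i => if h : i < n then x ⟨i, h⟩ else 0 with hgdef
  have hg : ∀ i : Fin n, g ↑i = x i := fun i => by simp [hgdef, i.isLt]
  set W : ℕ := ∑ i ∈ range n, if g i = 1 then 1 else 0 with hWdef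
  have hw : weight n x = W := by
    rw [weight, Finset.card_filter]
    exact sum_univ_conv _ _ (fun i => by rw [hg])
  obtain ⟨h1, h2, h3⟩ := main_ind n g
  rw [← hWdef] at h1 h2 h3
  have halpha : alphaO n x = ((W.choose 3 + W.choose 2 + W : ℕ) : ZMod 2) := by
    have tri : ∀ a : ZMod 2, a + a + a = a := by decide
    have sq : ∀ a : ZMod 2, a * a = a := by decide
    have hIic : ∀ j : Fin n, (∑ i ∈ Finset.Iic j, x i * x j)
        = x j + ∑ i ∈ Finset.Iio j, x i * x j := by
      intro j
      rw [← Finset.Iio_insert, Finset.sum_insert (by simp), sq]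
    rw [alphaO, fO]
    simp only [tri, hIic, Finset.sum_add_distrib]
    have t3 : (∑ k : Fin n, ∑ j ∈ Finset.Iio k, ∑ i ∈ Finset.Iio j, x i * x j * x k)
        = ∑ k ∈ range n, ∑ j ∈ range k, ∑ i ∈ range j, g i * g j * g k :=
      sum_univ_conv _ _ fun k =>
        (sum_Iio_conv k _ _ fun j =>
          (sum_Iio_conv j (fun i => x i * x j * x k)
            (fun i => g i * g ↑j * g ↑k)
            (fun i => by simp [hg])).symm).symm
    have t2 : (∑ j : Fin n, ∑ i ∈ Finset.Iio j, x i * x j)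
        = ∑ j ∈ range n, ∑ i ∈ range j, g i * g j :=
      sum_univ_conv _ _ fun j =>
        (sum_Iio_conv j (fun i => x i * x j) (fun i => g i * g ↑j)
          (fun i => by simp [hg])).symm
    have t1 : (∑ j : Fin n, x j) = ∑ i ∈ range n, g i := sum_univ_conv _ _ hg
    rw [t3, t2, t1, h3, h2, h1]
    push_cast
    ring
  obtain ⟨k2, k3⟩ := key W
  have hm : (W.choose 3 + W.choose 2 + W) % 2 = if W % 4 = 0 then 0 else 1 := by
    split_ifs with h <;> omega
  rw [halpha, hw, ← ZMod.natCast_mod _ 2, hm]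
  split_ifs <;> simp
end
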